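/- arXiv:0806.3468 — 6 statements merged into one kernel-verified Lean document; each statement's English description precedes it below -/
import Mathlib

section
/- For natural numbers n ≥ k ≥ 1, an integer r ≥ 0, and a sequence (a_m), one has B_{n,k}(0, ..., 0, a_{r+1}, a_{r+2}, ...) = (n!/(n-rk)!) · B_{n-rk, k}(a_{r+1}/(r+1)!·1!, ..., i!·a_{i+r}/(i+r)!, ...), i.e. the partial Bell polynomial of the shifted sequence with r leading zeros equals n!/(n-rk)! times the Bell polynomial B_{n-rk,k} evaluated at the sequence whose i-th entry is i!·a_{i+r}/(i+r)!, valid when n ≥ rk + k (and both sides are zero otherwise). -/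
open Finset

/-- The exponential partial Bell polynomial `B_{n,k}(x₁,x₂,…)`, defined via the
generating function `∑_{n} B_{n,k} tⁿ/n! = (1/k!) (∑_{m≥1} x_m t^m/m!)^k`. -/
noncomputable def bellB (n k : ℕ) (x : ℕ → ℝ) : ℝ :=
  ((Nat.factorial n : ℝ) / (Nat.factorial k : ℝ)) *
    PowerSeries.coeff n
      ((PowerSeries.mk fun m => if m = 0 then 0 else x m / (Nat.factorial m : ℝ)) ^ k)

/-- The complete Bell polynomial `A_n(x₁,…,x_n) = ∑_{k=1}^n B_{n,k}`, `A₀ = 1`. -/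
noncomputable def bellA (n : ℕ) (x : ℕ → ℝ) : ℝ :=
  if n = 0 then 1 else ∑ k ∈ Finset.Icc 1 n, bellB n k x

/-! The shift by `r` leading zeros multiplies the exponential generating function
`∑_{m ≥ 1} x_m t^m / m!` by `t^r`, after rescaling the coefficients; the `k`-th power then
picks up `t^{rk}`, which moves the coefficient of `t^n` to that of `t^{n-rk}`. -/

namespace PowerSeries

theorem coeff_X_pow_mul_pow {R : Type*} [CommSemiring R] (g : R⟦X⟧) {n r k : ℕ}
    (h : r * k ≤ n) : coeff n ((X ^ r * g) ^ k) = coeff (n - r * k) (g ^ k) := by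
  rw [mul_pow, ← pow_mul, coeff_X_pow_mul', if_pos h]

end PowerSeries

open PowerSeries

noncomputable def bellEgf (x : ℕ → ℝ) : PowerSeries ℝ :=
  mk fun m => if m = 0 then 0 else x m / (Nat.factorial m : ℝ)

theorem bellB_eq_coeff_bellEgf_pow (n k : ℕ) (x : ℕ → ℝ) :
    bellB n k x = (n.factorial / k.factorial : ℝ) * coeff n (bellEgf x ^ k) :=
  rfl

theorem bellEgf_shift (a : ℕ → ℝ) (r : ℕ) :
    bellEgf (fun m => if m ≤ r then 0 else a m) =
      X ^ r * bellEgf (fun i => (i.factorial : ℝ) * a (i + r) / (i + r).factorial) := by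
  ext m
  rw [coeff_X_pow_mul', bellEgf, bellEgf, coeff_mk]
  by_cases hmr : m ≤ r
  · rcases Nat.eq_zero_or_pos m with rfl | hm
    · simp
    · have : ¬ r ≤ m ∨ m - r = 0 := by omega
      rcases this with h | h <;> simp [hmr, h, hm.ne']
  · obtain ⟨i, rfl⟩ : ∃ i, m = i + 1 + r := ⟨m - r - 1, by omega⟩
    simp only [Nat.add_eq_zero_iff, one_ne_zero, and_false, false_and, ↓reduceIte,
      add_le_iff_nonpos_left, nonpos_iff_eq_zero, le_add_iff_nonneg_left, zero_le,
      show i + 1 + r - r = i + 1 by omega, coeff_mk]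
    field_simp

theorem bellB_of_bellEgf_eq_X_pow_mul {x y : ℕ → ℝ} {n k r : ℕ}
    (hxy : bellEgf x = X ^ r * bellEgf y) (h : r * k ≤ n) :
    bellB n k x = (n.factorial / (n - r * k).factorial : ℝ) * bellB (n - r * k) k y := by
  have hfac : ((n - r * k).factorial : ℝ) ≠ 0 := by positivity
  rw [bellB_eq_coeff_bellEgf_pow, bellB_eq_coeff_bellEgf_pow, hxy, coeff_X_pow_mul_pow _ h]
  field_simp

theorem stmt_4_general (a : ℕ → ℝ) (n k r : ℕ) (hn : r * k + k ≤ n) :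
    bellB n k (fun m => if m ≤ r then 0 else a m) =
      ((Nat.factorial n : ℝ) / (Nat.factorial (n - r * k) : ℝ)) *
        bellB (n - r * k) k
          (fun i => (Nat.factorial i : ℝ) * a (i + r) / (Nat.factorial (i + r) : ℝ)) :=
  bellB_of_bellEgf_eq_X_pow_mul (bellEgf_shift a r) (by omega)

theorem stmt_4 (a : ℕ → ℝ) (n k r : ℕ) (hk : 1 ≤ k) (hn : r * k + k ≤ n) :
    bellB n k (fun m => if m ≤ r then 0 else a m) =
      ((Nat.factorial n : ℝ) / (Nat.factorial (n - r * k) : ℝ)) *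
        bellB (n - r * k) k
          (fun i => (Nat.factorial i : ℝ) * a (i + r) / (Nat.factorial (i + r) : ℝ)) :=
  stmt_4_general a n k r hn
end

section
/- Let (f_n(x)) be a sequence of binomial type with f₀(x) = 1, let a be a real number, and define f_n(x; a) := (x/(an + x)) · f_n(an + x) for n ≥ 1 with f₀(x; a) := 1. Then for all natural numbers n ≥ k ≥ 1 and all real x, B_{n,k}(D_x f₁(x; a), D_x f₂(x; a), ..., D_x f_m(x; a), ...) = (1/k!) · D_z^k f_n(kx + z; a) |_{z=0}, where D_x denotes differentiation with respect to x in the polynomial sense. -/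
/-!
Put `φ_n = f_n / n!`. Binomial type says `φ_n(x + y) = ∑ φ_i(x) φ_j(y)`, i.e. `(φ_n)` is a
convolution family. Differentiating this identity gives `n φ_n(u) = u ∑_r r φ_r'(0) φ_{n-r}(u)`,
so `(x / (x + an)) φ_n(x + an)` is a polynomial in `x`: the Abel transform `ψ_n` of `φ`, which is
`F_n / n!`. The Abel transform satisfies the triangular system `∑ ψ_m(x) φ_{n-m}(-am) = φ_n(x)`;
this is proved through the sums `∑ φ_m(x + am) φ_l(y - am)`, which depend only on `x + y`. The
system determines `ψ` uniquely, and both `ψ_n(x + z)` and `∑ ψ_i(x) ψ_j(z)` solve it, so `ψ` is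
again a convolution family. Finally, for any convolution family `ψ`, differentiating
`ψ_n(x + y) = ∑ ψ_i(x) ψ_j(y)` shows that the coefficient of `tⁿ` in `(∑ ψ_m'(x) tᵐ)ᵏ` is
`ψ_n⁽ᵏ⁾(kx)`, which is the Bell polynomial identity.
-/

open Finset

open Polynomial

section Antidiagonal

variable {M : Type*} [AddCommMonoid M]

theorem sum_antidiagonal_antidiagonal_fst (n : ℕ) (h : ℕ → ℕ → ℕ → M) :
    ∑ p ∈ antidiagonal n, ∑ q ∈ antidiagonal p.1, h q.1 q.2 p.2 =
      ∑ p ∈ antidiagonal n, ∑ q ∈ antidiagonal p.2, h p.1 q.1 q.2 := by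
  simp_rw [sum_sigma']
  refine sum_bij' (fun x _ => ⟨(x.2.1, x.2.2 + x.1.2), (x.2.2, x.1.2)⟩)
    (fun y _ => ⟨(y.1.1 + y.2.1, y.2.2), (y.1.1, y.2.1)⟩) ?_ ?_ ?_ ?_ ?_ <;>
  rintro ⟨⟨i, j⟩, ⟨k, l⟩⟩ hx <;>
  simp_all [mem_sigma, HasAntidiagonal.mem_antidiagonal] <;> omega

theorem sum_antidiagonal_antidiagonal_snd_comm (n : ℕ) (h : ℕ → ℕ → ℕ → M) :
    ∑ p ∈ antidiagonal n, ∑ q ∈ antidiagonal p.2, h p.1 q.1 q.2 =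
      ∑ p ∈ antidiagonal n, ∑ q ∈ antidiagonal p.2, h q.1 p.1 q.2 := by
  calc _ = ∑ p ∈ antidiagonal n, ∑ q ∈ antidiagonal p.1, h q.1 q.2 p.2 :=
        (sum_antidiagonal_antidiagonal_fst n h).symm
    _ = ∑ p ∈ antidiagonal n, ∑ q ∈ antidiagonal p.1, h q.2 q.1 p.2 :=
        sum_congr rfl fun p _ => (Nat.sum_antidiagonal_swap (f := fun q => h q.1 q.2 p.2)).symm
    _ = _ := sum_antidiagonal_antidiagonal_fst n fun i j k => h j i k

end Antidiagonal

section PolynomialDerivative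

variable {R : Type*}

theorem iterate_derivative_comp_X_add_C [CommSemiring R] (p : R[X]) (c : R) (k : ℕ) :
    derivative^[k] (p.comp (X + C c)) = (derivative^[k] p).comp (X + C c) := by
  induction k generalizing p with
  | zero => rfl
  | succ k ih => simp [ih (derivative p), derivative_comp]

theorem eval_iterate_derivative_add_of_forall [CommRing R] [IsDomain R] [Infinite R] {ι : Type*}
    {s : Finset ι} {p : R[X]} {q : ι → R[X]} {w : ι → R} {c : R}
    (h : ∀ z, p.eval (z + c) = ∑ i ∈ s, w i * (q i).eval z) (k : ℕ) (z : R) :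
    (derivative^[k] p).eval (z + c) = ∑ i ∈ s, w i * (derivative^[k] (q i)).eval z := by
  have hpoly : p.comp (X + C c) = ∑ i ∈ s, C (w i) * q i :=
    Polynomial.funext fun z => by simp [h, eval_finsetSum]
  simpa [iterate_derivative_comp_X_add_C, iterate_derivative_sum, iterate_derivative_C_mul,
    eval_finsetSum] using congrArg (fun r => (derivative^[k] r).eval z) hpoly

end PolynomialDerivative

theorem iteratedDeriv_eval_const_add (p : ℝ[X]) (c : ℝ) (k : ℕ) :
    iteratedDeriv k (fun z => p.eval (c + z)) 0 = (derivative^[k] p).eval c := by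
  have hiter : ∀ q : ℝ[X],
      iteratedDeriv k (fun z => q.eval z) = fun z => (derivative^[k] q).eval z := by
    induction k with
    | zero => simp
    | succ k ih =>
      intro q
      rw [iteratedDeriv_succ, ih, Function.iterate_succ_apply']
      exact funext fun z => Polynomial.deriv _
  have hcomp : (fun z => p.eval (c + z)) = fun z => (p.comp (X + C c)).eval z := by
    funext z
    simp [add_comm]
  rw [hcomp, hiter, iterate_derivative_comp_X_add_C]
  simp

structure IsConvolutionFamily (φ : ℕ → ℝ[X]) : Prop where
  zero : φ 0 = 1
  eval_add (n : ℕ) (x y : ℝ) :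
    (φ n).eval (x + y) = ∑ p ∈ antidiagonal n, (φ p.1).eval x * (φ p.2).eval y

noncomputable def divFactorial (f : ℕ → ℝ[X]) (n : ℕ) : ℝ[X] := C ((n.factorial : ℝ)⁻¹) * f n

theorem isConvolutionFamily_divFactorial {f : ℕ → ℝ[X]} (hf0 : f 0 = 1)
    (hbin : ∀ n : ℕ, ∀ x y : ℝ, (f n).eval (x + y) =
      ∑ j ∈ range (n + 1), (n.choose j : ℝ) * (f j).eval x * (f (n - j)).eval y) :
    IsConvolutionFamily (divFactorial f) where
  zero := by simp [divFactorial, hf0]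
  eval_add n x y := by
    rw [Nat.sum_antidiagonal_eq_sum_range_succ (fun i j => (divFactorial f i).eval x *
      (divFactorial f j).eval y)]
    simp only [divFactorial, eval_mul, eval_C, hbin n x y, mul_sum]
    refine sum_congr rfl fun j hj => ?_
    rw [Nat.cast_choose ℝ (Nat.lt_succ_iff.1 (mem_range.1 hj))]
    field_simp

noncomputable def derivAtZero (φ : ℕ → ℝ[X]) (n : ℕ) : ℝ := (derivative (φ n)).eval 0

namespace IsConvolutionFamily

variable {φ : ℕ → ℝ[X]} (hφ : IsConvolutionFamily φ)
include hφ

theorem eval_zero (n : ℕ) : (φ n).eval 0 = if n = 0 then 1 else 0 := by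
  set s : PowerSeries ℝ := PowerSeries.mk fun n => (φ n).eval 0
  have hs : s * s = s := by
    ext n
    simp [s, PowerSeries.coeff_mul, ← hφ.eval_add]
  have hunit : IsUnit s := PowerSeries.isUnit_iff_constantCoeff.2 (by simp [s, hφ.zero])
  have hs1 : s = 1 := hunit.mul_left_cancel (by rw [hs, mul_one])
  simpa [s, PowerSeries.coeff_one] using congrArg (PowerSeries.coeff n) hs1

theorem derivAtZero_zero : derivAtZero φ 0 = 0 := by simp [derivAtZero, hφ.zero]

theorem derivative_eval (n : ℕ) (u : ℝ) :
    (derivative (φ n)).eval u = ∑ p ∈ antidiagonal n, derivAtZero φ p.1 * (φ p.2).eval u := by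
  have hl : HasDerivAt (fun t => (φ n).eval (t + u)) ((derivative (φ n)).eval (0 + u)) 0 :=
    ((φ n).hasDerivAt (0 + u)).comp_add_const 0 u
  have hr : HasDerivAt (fun t => ∑ p ∈ antidiagonal n, (φ p.1).eval t * (φ p.2).eval u)
      (∑ p ∈ antidiagonal n, derivAtZero φ p.1 * (φ p.2).eval u) 0 :=
    HasDerivAt.fun_sum fun p _ => ((φ p.1).hasDerivAt 0).mul_const _
  rw [funext fun t => hφ.eval_add n t u] at hl
  simpa using hl.unique hr

theorem hasDerivAt_eval (n : ℕ) (u : ℝ) :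
    HasDerivAt (fun t => (φ n).eval t)
      (∑ p ∈ antidiagonal n, derivAtZero φ p.1 * (φ p.2).eval u) u :=
  hφ.derivative_eval n u ▸ (φ n).hasDerivAt u

theorem hasDerivAt_natCast_mul_eval_sub (n : ℕ)
    (ih : ∀ m < n, ∀ u : ℝ, (m : ℝ) * (φ m).eval u =
      u * ∑ p ∈ antidiagonal m, p.1 * derivAtZero φ p.1 * (φ p.2).eval u) (t : ℝ) :
    HasDerivAt (fun t => (n : ℝ) * (φ n).eval t -
      t * ∑ p ∈ antidiagonal n, p.1 * derivAtZero φ p.1 * (φ p.2).eval t) 0 t := by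
  set d := derivAtZero φ
  have hsplit : (n : ℝ) * ∑ p ∈ antidiagonal n, d p.1 * (φ p.2).eval t =
      ∑ p ∈ antidiagonal n, p.1 * d p.1 * (φ p.2).eval t +
        ∑ p ∈ antidiagonal n, d p.1 * (p.2 * (φ p.2).eval t) := by
    rw [mul_sum, ← sum_add_distrib]
    refine sum_congr rfl fun p hp => ?_
    rw [← HasAntidiagonal.mem_antidiagonal.1 hp]
    push_cast
    ring
  have hterm : ∀ p ∈ antidiagonal n, d p.1 * (p.2 * (φ p.2).eval t) =
      ∑ q ∈ antidiagonal p.2, t * (d p.1 * (q.1 * d q.1 * (φ q.2).eval t)) := by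
    intro p hp
    rcases Nat.eq_zero_or_pos p.1 with h0 | hpos
    · simp [h0, d, hφ.derivAtZero_zero]
    · rw [ih p.2 (by have := HasAntidiagonal.mem_antidiagonal.1 hp; omega), ← mul_sum,
        mul_sum, mul_sum, mul_sum]
      exact sum_congr rfl fun q _ => by ring
  have hrec : ∑ p ∈ antidiagonal n, d p.1 * (p.2 * (φ p.2).eval t) =
      t * ∑ p ∈ antidiagonal n, p.1 * d p.1 *
        ∑ q ∈ antidiagonal p.2, d q.1 * (φ q.2).eval t := by
    rw [sum_congr rfl hterm]
    simp_rw [mul_sum]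
    exact (sum_antidiagonal_antidiagonal_snd_comm n fun i j k =>
      t * (d i * (j * d j * (φ k).eval t))).trans
        (sum_congr rfl fun p _ => sum_congr rfl fun q _ => by ring)
  refine (((hφ.hasDerivAt_eval n t).const_mul (n : ℝ)).sub ((hasDerivAt_id t).mul
    (HasDerivAt.fun_sum fun (p : ℕ × ℕ) _ =>
      (hφ.hasDerivAt_eval p.2 t).const_mul (p.1 * d p.1)))).congr_deriv ?_
  rw [hsplit, hrec]
  simp only [id, one_mul, mul_sum, mul_assoc]
  ring

theorem natCast_mul_eval (n : ℕ) (u : ℝ) :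
    (n : ℝ) * (φ n).eval u =
      u * ∑ p ∈ antidiagonal n, p.1 * derivAtZero φ p.1 * (φ p.2).eval u := by
  induction n using Nat.strong_induction_on generalizing u with
  | _ n ih =>
  have hderiv := hφ.hasDerivAt_natCast_mul_eval_sub n ih
  have hconst := is_const_of_deriv_eq_zero (fun t => (hderiv t).differentiableAt)
    (fun t => (hderiv t).deriv) u 0
  rcases eq_or_ne n 0 with rfl | hn
  · simp
  · simpa [hφ.eval_zero, hn, sub_eq_zero] using hconst

theorem mul_sum_eval_natCast_mul (a : ℝ) {m : ℕ} (hm : m ≠ 0) :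
    a * ∑ p ∈ antidiagonal m, p.1 * derivAtZero φ p.1 * (φ p.2).eval (a * m) =
      (φ m).eval (a * m) := by
  apply mul_left_cancel₀ (Nat.cast_ne_zero.2 hm : (m : ℝ) ≠ 0)
  rw [hφ.natCast_mul_eval m (a * m)]
  ring

end IsConvolutionFamily

noncomputable def shiftConv (φ : ℕ → ℝ[X]) (a : ℝ) (n : ℕ) (x y : ℝ) : ℝ :=
  ∑ p ∈ antidiagonal n, (φ p.1).eval (x + a * p.1) * (φ p.2).eval (y - a * p.1)

namespace IsConvolutionFamily

variable {φ : ℕ → ℝ[X]} (hφ : IsConvolutionFamily φ) (a : ℝ)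
include hφ

theorem sum_derivative_eval_mul_eval (n : ℕ) (x y : ℝ) :
    ∑ p ∈ antidiagonal n,
        (derivative (φ p.1)).eval (x + a * p.1) * (φ p.2).eval (y - a * p.1) =
      ∑ p ∈ antidiagonal n,
        derivAtZero φ p.1 * shiftConv φ a p.2 (x + a * p.1) (y - a * p.1) := by
  simp_rw [hφ.derivative_eval, sum_mul, shiftConv, mul_sum]
  rw [← sum_antidiagonal_antidiagonal_fst n fun i j k => derivAtZero φ i *
    ((φ j).eval (x + a * i + a * j) * (φ k).eval (y - a * i - a * j))]
  refine sum_congr rfl fun p _ => sum_congr rfl fun q hq => ?_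
  rw [← HasAntidiagonal.mem_antidiagonal.1 hq]
  push_cast
  ring_nf

theorem sum_eval_mul_derivative_eval (n : ℕ) (x y : ℝ) :
    ∑ p ∈ antidiagonal n,
        (φ p.1).eval (x + a * p.1) * (derivative (φ p.2)).eval (y - a * p.1) =
      ∑ p ∈ antidiagonal n, derivAtZero φ p.1 * shiftConv φ a p.2 x y := by
  simp_rw [hφ.derivative_eval, mul_sum, shiftConv, mul_sum]
  rw [sum_antidiagonal_antidiagonal_snd_comm n fun i j k => (φ i).eval (x + a * i) *
    (derivAtZero φ j * (φ k).eval (y - a * i))]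
  exact sum_congr rfl fun p _ => sum_congr rfl fun q _ => by ring

theorem shiftConv_eq (n : ℕ) (x y : ℝ) : shiftConv φ a n x y = shiftConv φ a n 0 (x + y) := by
  induction n using Nat.strong_induction_on generalizing x y with
  | _ n ih =>
  have hderiv (β : ℝ) : HasDerivAt (fun β => shiftConv φ a n (x + β) (y - β)) 0 β := by
    have h := HasDerivAt.fun_sum (u := antidiagonal n) fun p _ =>
      (((φ p.1).hasDerivAt _).comp β (((hasDerivAt_id β).const_add x).add_const (a * p.1))).mul
        (((φ p.2).hasDerivAt _).comp β (((hasDerivAt_id β).const_sub y).sub_const (a * p.1)))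
    refine h.congr_deriv ?_
    simp only [id, Function.comp_apply, mul_one, mul_neg, sum_add_distrib, sum_neg_distrib]
    rw [hφ.sum_derivative_eval_mul_eval, hφ.sum_eval_mul_derivative_eval, ← sub_eq_add_neg,
      ← sum_sub_distrib]
    refine sum_eq_zero fun p hp => ?_
    rcases Nat.eq_zero_or_pos p.1 with h0 | hpos
    · simp [h0, hφ.derivAtZero_zero]
    · have hlt : p.2 < n := by have := HasAntidiagonal.mem_antidiagonal.1 hp; omega
      rw [ih p.2 hlt, ih p.2 hlt (x + β)]
      ring_nf
  have := is_const_of_deriv_eq_zero (fun β => (hderiv β).differentiableAt)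
    (fun β => (hderiv β).deriv) 0 (-x)
  simpa [add_comm y] using this

theorem shiftConv_eq_sum (n : ℕ) (x y : ℝ) :
    shiftConv φ a n x y =
      ∑ p ∈ antidiagonal n, (φ p.1).eval (x + y) * shiftConv φ a p.2 0 0 := by
  have hexpand : ∀ p ∈ antidiagonal n,
      (φ p.1).eval (0 + a * p.1) * (φ p.2).eval (x + y - a * p.1) =
        ∑ q ∈ antidiagonal p.2, (φ p.1).eval (a * p.1) *
          ((φ q.1).eval (x + y) * (φ q.2).eval (-(a * p.1))) := by
    intro p _
    rw [zero_add, sub_eq_add_neg, hφ.eval_add p.2 (x + y), mul_sum]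
  rw [hφ.shiftConv_eq a n x y, shiftConv, sum_congr rfl hexpand,
    sum_antidiagonal_antidiagonal_snd_comm n fun i j k => (φ i).eval (a * i) *
      ((φ j).eval (x + y) * (φ k).eval (-(a * i)))]
  refine sum_congr rfl fun p _ => ?_
  rw [shiftConv, mul_sum]
  exact sum_congr rfl fun q _ => by ring_nf

theorem shiftConv_zero_zero_sub (n : ℕ) :
    shiftConv φ a n 0 0 - a * ∑ p ∈ antidiagonal n, p.1 * derivAtZero φ p.1 *
      shiftConv φ a p.2 0 0 = if n = 0 then 1 else 0 := by
  have hshift : ∀ p ∈ antidiagonal n, a * (p.1 * derivAtZero φ p.1 * shiftConv φ a p.2 0 0) =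
      ∑ q ∈ antidiagonal p.2, a * p.1 * derivAtZero φ p.1 *
        ((φ q.1).eval (a * p.1 + a * q.1) * (φ q.2).eval (-(a * p.1) - a * q.1)) := by
    intro p _
    have h := hφ.shiftConv_eq a p.2 (a * p.1) (-(a * p.1))
    rw [add_neg_cancel] at h
    rw [← h, shiftConv, mul_sum, mul_sum]
    exact sum_congr rfl fun q _ => by ring_nf
  have hinner : ∀ p ∈ antidiagonal n,
      ∑ q ∈ antidiagonal p.1, a * q.1 * derivAtZero φ q.1 *
        ((φ q.2).eval (a * q.1 + a * q.2) * (φ p.2).eval (-(a * q.1) - a * q.2)) =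
      (a * ∑ q ∈ antidiagonal p.1, q.1 * derivAtZero φ q.1 * (φ q.2).eval (a * p.1)) *
        (φ p.2).eval (-(a * p.1)) := by
    intro p _
    rw [mul_sum, sum_mul]
    refine sum_congr rfl fun q hq => ?_
    rw [← HasAntidiagonal.mem_antidiagonal.1 hq]
    push_cast
    ring_nf
  rw [mul_sum, sum_congr rfl hshift, ← sum_antidiagonal_antidiagonal_fst n fun i j k =>
    a * i * derivAtZero φ i * ((φ j).eval (a * i + a * j) * (φ k).eval (-(a * i) - a * j)),
    sum_congr rfl hinner, shiftConv, ← sum_sub_distrib,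
    sum_eq_single_of_mem (0, n) (HasAntidiagonal.mem_antidiagonal.2 (zero_add n))]
  · simp [hφ.zero, hφ.eval_zero]
  · intro p hp hne
    have hp1 : p.1 ≠ 0 := fun h =>
      hne (Prod.ext h (by have := HasAntidiagonal.mem_antidiagonal.1 hp; simp_all))
    rw [hφ.mul_sum_eval_natCast_mul a hp1, zero_add, zero_sub, sub_self]

end IsConvolutionFamily

/-- `x / (x + a n) * φ_n(x + a n)`, written as a polynomial by means of
`IsConvolutionFamily.natCast_mul_eval`. -/
noncomputable def abelTransform (φ : ℕ → ℝ[X]) (a : ℝ) (n : ℕ) : ℝ[X] :=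
  (φ n - C a * ∑ p ∈ antidiagonal n, C (p.1 * derivAtZero φ p.1) * φ p.2).comp (X + C (a * n))

theorem eval_abelTransform (φ : ℕ → ℝ[X]) (a : ℝ) (n : ℕ) (x : ℝ) :
    (abelTransform φ a n).eval x = (φ n).eval (x + a * n) -
      a * ∑ p ∈ antidiagonal n, p.1 * derivAtZero φ p.1 * (φ p.2).eval (x + a * n) := by
  simp [abelTransform, eval_finsetSum]

namespace IsConvolutionFamily

variable {φ : ℕ → ℝ[X]} (hφ : IsConvolutionFamily φ) (a : ℝ)
include hφ

theorem mul_eval_abelTransform (n : ℕ) (x : ℝ) :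
    (x + a * n) * (abelTransform φ a n).eval x = x * (φ n).eval (x + a * n) := by
  rw [eval_abelTransform]
  linear_combination a * hφ.natCast_mul_eval n (x + a * n)

theorem sum_mul_eval_neg_eq_sum_mul_shiftConv (n : ℕ) (x : ℝ) :
    ∑ p ∈ antidiagonal n, (a * ∑ q ∈ antidiagonal p.1, q.1 * derivAtZero φ q.1 *
        (φ q.2).eval (x + a * p.1)) * (φ p.2).eval (-(a * p.1)) =
      ∑ p ∈ antidiagonal n, (φ p.1).eval x *
        (a * ∑ q ∈ antidiagonal p.2, q.1 * derivAtZero φ q.1 * shiftConv φ a q.2 0 0) := by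
  have hsubst : ∀ p ∈ antidiagonal n, (a * ∑ q ∈ antidiagonal p.1, q.1 * derivAtZero φ q.1 *
      (φ q.2).eval (x + a * p.1)) * (φ p.2).eval (-(a * p.1)) =
      ∑ q ∈ antidiagonal p.1, a * q.1 * derivAtZero φ q.1 *
        ((φ q.2).eval (x + a * q.1 + a * q.2) * (φ p.2).eval (-(a * q.1) - a * q.2)) := by
    intro p _
    rw [mul_sum, sum_mul]
    refine sum_congr rfl fun q hq => ?_
    rw [← HasAntidiagonal.mem_antidiagonal.1 hq]
    push_cast
    ring_nf
  have hshift : ∀ p ∈ antidiagonal n, ∑ q ∈ antidiagonal p.2, a * p.1 * derivAtZero φ p.1 *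
      ((φ q.1).eval (x + a * p.1 + a * q.1) * (φ q.2).eval (-(a * p.1) - a * q.1)) =
      ∑ q ∈ antidiagonal p.2, a * p.1 * derivAtZero φ p.1 *
        ((φ q.1).eval x * shiftConv φ a q.2 0 0) := by
    intro p _
    rw [← mul_sum, ← mul_sum, ← shiftConv, hφ.shiftConv_eq_sum, add_neg_cancel_right]
  rw [sum_congr rfl hsubst, sum_antidiagonal_antidiagonal_fst n fun i j k =>
    a * i * derivAtZero φ i * ((φ j).eval (x + a * i + a * j) * (φ k).eval (-(a * i) - a * j)),
    sum_congr rfl hshift, sum_antidiagonal_antidiagonal_snd_comm n fun i j k =>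
    a * i * derivAtZero φ i * ((φ j).eval x * shiftConv φ a k 0 0)]
  refine sum_congr rfl fun p _ => ?_
  rw [mul_sum, mul_sum]
  exact sum_congr rfl fun q _ => by ring

theorem sum_eval_abelTransform_mul_eval_neg (n : ℕ) (x : ℝ) :
    ∑ p ∈ antidiagonal n, (abelTransform φ a p.1).eval x * (φ p.2).eval (-(a * p.1)) =
      (φ n).eval x := by
  have hmain : ∑ p ∈ antidiagonal n, (φ p.1).eval (x + a * p.1) * (φ p.2).eval (-(a * p.1)) =
      ∑ p ∈ antidiagonal n, (φ p.1).eval x * shiftConv φ a p.2 0 0 := by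
    simpa [shiftConv] using hφ.shiftConv_eq_sum a n x 0
  simp_rw [eval_abelTransform, sub_mul]
  rw [sum_sub_distrib, hφ.sum_mul_eval_neg_eq_sum_mul_shiftConv, hmain, ← sum_sub_distrib]
  simp_rw [← mul_sub, hφ.shiftConv_zero_zero_sub]
  rw [sum_eq_single_of_mem (n, 0) (HasAntidiagonal.mem_antidiagonal.2 (add_zero n))]
  · simp
  · intro p hp hne
    have hp2 : p.2 ≠ 0 := fun h =>
      hne (Prod.ext (by have := HasAntidiagonal.mem_antidiagonal.1 hp; simp_all) h)
    simp [hp2]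

theorem eval_add_eq_sum_eval_abelTransform (n : ℕ) (x y : ℝ) :
    (φ n).eval (x + y) =
      ∑ p ∈ antidiagonal n, (abelTransform φ a p.1).eval x * (φ p.2).eval (y - a * p.1) := by
  have hexpand : ∀ p ∈ antidiagonal n,
      (abelTransform φ a p.1).eval x * (φ p.2).eval (y - a * p.1) =
        ∑ q ∈ antidiagonal p.2, (abelTransform φ a p.1).eval x *
          ((φ q.1).eval (-(a * p.1)) * (φ q.2).eval y) := by
    intro p _
    rw [sub_eq_neg_add, hφ.eval_add, mul_sum]
  rw [sum_congr rfl hexpand, ← sum_antidiagonal_antidiagonal_fst n fun i j k =>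
    (abelTransform φ a i).eval x * ((φ j).eval (-(a * i)) * (φ k).eval y), hφ.eval_add]
  refine sum_congr rfl fun p _ => ?_
  rw [← hφ.sum_eval_abelTransform_mul_eval_neg a p.1 x, sum_mul]
  exact sum_congr rfl fun q _ => by ring

theorem eq_of_forall_sum_mul_eval_neg {c c' : ℕ → ℝ}
    (h : ∀ n, ∑ p ∈ antidiagonal n, c p.1 * (φ p.2).eval (-(a * p.1)) =
      ∑ p ∈ antidiagonal n, c' p.1 * (φ p.2).eval (-(a * p.1))) : c = c' := by
  funext n
  induction n using Nat.strong_induction_on with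
  | _ n ih =>
  have hdiff := sub_eq_zero.2 (h n)
  rw [← sum_sub_distrib, sum_eq_single_of_mem (n, 0)
    (HasAntidiagonal.mem_antidiagonal.2 (add_zero n))] at hdiff
  · simpa [hφ.zero, sub_eq_zero] using hdiff
  · intro p hp hne
    have hlt : p.1 < n := by
      have := HasAntidiagonal.mem_antidiagonal.1 hp
      by_contra hge
      exact hne (Prod.ext (by omega) (by omega))
    rw [ih p.1 hlt, sub_self]

end IsConvolutionFamily

theorem isConvolutionFamily_abelTransform {φ : ℕ → ℝ[X]} (hφ : IsConvolutionFamily φ) (a : ℝ) :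
    IsConvolutionFamily (abelTransform φ a) where
  zero := by simp [abelTransform, hφ.zero]
  eval_add n x z := by
    refine congrFun (hφ.eq_of_forall_sum_mul_eval_neg a
      (c := fun m => (abelTransform φ a m).eval (x + z))
      (c' := fun m => ∑ q ∈ antidiagonal m,
        (abelTransform φ a q.1).eval x * (abelTransform φ a q.2).eval z) fun n => ?_) n
    have hsubst : ∀ p ∈ antidiagonal n, (∑ q ∈ antidiagonal p.1,
        (abelTransform φ a q.1).eval x * (abelTransform φ a q.2).eval z) *
          (φ p.2).eval (-(a * p.1)) =
        ∑ q ∈ antidiagonal p.1, (abelTransform φ a q.1).eval x *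
          ((abelTransform φ a q.2).eval z * (φ p.2).eval (-(a * q.1) - a * q.2)) := by
      intro p _
      rw [sum_mul]
      refine sum_congr rfl fun q hq => ?_
      rw [← HasAntidiagonal.mem_antidiagonal.1 hq]
      push_cast
      ring_nf
    rw [hφ.sum_eval_abelTransform_mul_eval_neg, sum_congr rfl hsubst,
      sum_antidiagonal_antidiagonal_fst n fun i j k => (abelTransform φ a i).eval x *
        ((abelTransform φ a j).eval z * (φ k).eval (-(a * i) - a * j)),
      hφ.eval_add_eq_sum_eval_abelTransform a]
    refine sum_congr rfl fun p _ => ?_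
    rw [← mul_sum, ← hφ.eval_add_eq_sum_eval_abelTransform a, sub_eq_add_neg]

theorem divFactorial_eq_abelTransform {f F : ℕ → ℝ[X]} {a : ℝ}
    (hf : IsConvolutionFamily (divFactorial f)) (hF0 : F 0 = 1)
    (hF : ∀ n : ℕ, 1 ≤ n → ∀ x : ℝ, (a * n + x) * (F n).eval x = x * (f n).eval (a * n + x)) :
    divFactorial F = abelTransform (divFactorial f) a := by
  funext n
  rcases Nat.eq_zero_or_pos n with rfl | hn
  · simp [divFactorial, hF0, (isConvolutionFamily_abelTransform hf a).zero]
  refine mul_left_cancel₀ (X_add_C_ne_zero (a * n)) (Polynomial.funext fun x => ?_)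
  have hx := hf.mul_eval_abelTransform a n x
  have hFx := hF n hn x
  simp only [eval_mul, eval_add, eval_X, eval_C, divFactorial] at hx ⊢
  rw [hx, add_comm x, mul_left_comm, hFx, add_comm]
  ring

namespace IsConvolutionFamily

variable {φ : ℕ → ℝ[X]} (hφ : IsConvolutionFamily φ)
include hφ

theorem eval_iterate_derivative_succ_add (k n : ℕ) (x y : ℝ) :
    (derivative^[k + 1] (φ n)).eval (x + y) =
      ∑ p ∈ antidiagonal n, (derivative^[k] (φ p.1)).eval y * (derivative (φ p.2)).eval x := by
  have hk (u v : ℝ) : (derivative^[k] (φ n)).eval (u + v) =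
      ∑ p ∈ antidiagonal n, (φ p.2).eval v * (derivative^[k] (φ p.1)).eval u :=
    eval_iterate_derivative_add_of_forall (fun z => by simp_rw [hφ.eval_add, mul_comm]) k u
  have hsucc := eval_iterate_derivative_add_of_forall (c := y)
    (w := fun p : ℕ × ℕ => (derivative^[k] (φ p.1)).eval y) (q := fun p => φ p.2)
    (fun z => by rw [add_comm, hk]; exact sum_congr rfl fun p _ => mul_comm _ _) 1 x
  simpa [Function.iterate_succ_apply'] using hsucc

theorem coeff_pow_mk_derivative_eval (k n : ℕ) (x : ℝ) :
    PowerSeries.coeff n ((PowerSeries.mk fun m => (derivative (φ m)).eval x) ^ k) =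
      (derivative^[k] (φ n)).eval (k * x) := by
  induction k generalizing n with
  | zero => simp [PowerSeries.coeff_one, hφ.eval_zero]
  | succ k ih =>
    rw [pow_succ, PowerSeries.coeff_mul, Nat.cast_succ, add_one_mul, add_comm,
      hφ.eval_iterate_derivative_succ_add]
    simp [ih]

end IsConvolutionFamily

theorem stmt_5_general (f : ℕ → Polynomial ℝ) (hf0 : f 0 = 1)
    (hbin : ∀ n : ℕ, ∀ x y : ℝ, (f n).eval (x + y) =
      ∑ j ∈ Finset.range (n + 1), (n.choose j : ℝ) * (f j).eval x * (f (n - j)).eval y)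
    (a : ℝ) (F : ℕ → Polynomial ℝ) (hF0 : F 0 = 1)
    (hF : ∀ n : ℕ, 1 ≤ n → ∀ x : ℝ, (a * n + x) * (F n).eval x = x * (f n).eval (a * n + x))
    (n k : ℕ) (x : ℝ) :
    bellB n k (fun m => (Polynomial.derivative (F m)).eval x) =
      (1 / (Nat.factorial k : ℝ)) *
        iteratedDeriv k (fun z => (F n).eval ((k : ℝ) * x + z)) 0 := by
  have hf := isConvolutionFamily_divFactorial hf0 hbin
  have hψ : IsConvolutionFamily (divFactorial F) :=
    divFactorial_eq_abelTransform hf hF0 hF ▸ isConvolutionFamily_abelTransform hf a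
  have hseries : (PowerSeries.mk fun m => if m = 0 then 0 else
      (derivative (F m)).eval x / (m.factorial : ℝ)) =
      PowerSeries.mk fun m => (derivative (divFactorial F m)).eval x := by
    ext m
    rcases eq_or_ne m 0 with rfl | hm
    · simp [divFactorial, hF0]
    · simp [divFactorial, hm, div_eq_inv_mul]
  rw [bellB, hseries, hψ.coeff_pow_mk_derivative_eval, iteratedDeriv_eval_const_add, divFactorial,
    iterate_derivative_C_mul, eval_mul, eval_C]
  field_simp

/-- `F n` plays the role of the binomial-type sequence `f_n(x;a) = (x/(an+x)) f_n(an+x)`,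
characterized (as a polynomial) by the cleared-denominator identity `hF`. -/
theorem stmt_5 (f : ℕ → Polynomial ℝ) (hf0 : f 0 = 1) (hdeg : ∀ n, (f n).natDegree = n)
    (hbin : ∀ n : ℕ, ∀ x y : ℝ, (f n).eval (x + y) =
      ∑ j ∈ Finset.range (n + 1), (n.choose j : ℝ) * (f j).eval x * (f (n - j)).eval y)
    (a : ℝ) (F : ℕ → Polynomial ℝ) (hF0 : F 0 = 1)
    (hF : ∀ n : ℕ, 1 ≤ n → ∀ x : ℝ, (a * n + x) * (F n).eval x = x * (f n).eval (a * n + x))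
    (n k : ℕ) (hk : 1 ≤ k) (hkn : k ≤ n) (x : ℝ) :
    bellB n k (fun m => (Polynomial.derivative (F m)).eval x) =
      (1 / (Nat.factorial k : ℝ)) *
        iteratedDeriv k (fun z => (F n).eval ((k : ℝ) * x + z)) 0 :=
  stmt_5_general f hf0 hbin a F hF0 hF n k x
end

section
/- Let (f_n(x)) be a sequence of binomial type with f₀(x) = 1, a, x, α real numbers, and f_n(x; a) := (x/(an + x)) f_n(an + x) with f₀(x; a) := 1. Then for all natural numbers n ≥ k ≥ 1, B_{n,k}(α, 2·D_{z=0}(e^{αz} f₁(x + z; a)), ..., m·D_{z=0}(e^{αz} f_{m-1}(x + z; a)), ...) = C(n,k) · D_{z=0}^k (e^{αz} f_{n-k}(kx + z; a)), where the m-th argument of B_{n,k} is m·D_{z=0}(e^{αz} f_{m-1}(x + z; a)). -/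
open Finset

namespace Stmt6Aux
open Polynomial



/-- choose swap identity over ℝ -/
lemma choose_swap {n l m : ℕ} (h : l + m ≤ n) :
    ((n.choose l : ℝ) * ((n - l).choose m : ℝ)) = (n.choose m : ℝ) * ((n - m).choose l : ℝ) := by
  have hl : l ≤ n := le_trans (Nat.le_add_right _ _) h
  have hm : m ≤ n := le_trans (Nat.le_add_left _ _) h
  have hml : m ≤ n - l := Nat.le_sub_of_add_le (by omega)
  have hlm : l ≤ n - m := Nat.le_sub_of_add_le (by omega)
  rw [Nat.cast_choose ℝ hl, Nat.cast_choose ℝ hm, Nat.cast_choose ℝ hml, Nat.cast_choose ℝ hlm]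
  have h1 : n - l - m = n - m - l := by omega
  rw [h1]
  have f0 : ∀ j : ℕ, (Nat.factorial j : ℝ) ≠ 0 := fun j => Nat.cast_ne_zero.2 (Nat.factorial_ne_zero j)
  field_simp [f0]

/-- double sum swap with choose weights -/
lemma sum_choose_swap (n : ℕ) (φ : ℕ → ℕ → ℝ) :
    ∑ l ∈ range (n + 1), ∑ m ∈ range (n - l + 1),
      (n.choose l : ℝ) * ((n - l).choose m : ℝ) * φ l m
    = ∑ m ∈ range (n + 1), ∑ l ∈ range (n - m + 1),
      (n.choose m : ℝ) * ((n - m).choose l : ℝ) * φ l m := by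
  have key : ∀ (ψ : ℕ → ℕ → ℝ),
      (∀ l m, l ≤ n → m ≤ n → n < l + m → ψ l m = 0) →
      ∑ l ∈ range (n + 1), ∑ m ∈ range (n - l + 1), ψ l m
        = ∑ l ∈ range (n + 1), ∑ m ∈ range (n + 1), ψ l m := by
    intro ψ hψ
    refine Finset.sum_congr rfl fun l hl => ?_
    have hl' : l ≤ n := by simpa [Nat.lt_succ_iff] using hl
    refine Finset.sum_subset ?_ ?_
    · intro m hm; simp only [Finset.mem_range] at *; omega
    · intro m hm hm'; simp only [Finset.mem_range] at *
      exact hψ l m hl' (by omega) (by omega)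
  rw [key _ (fun l m hl hm hlm => by
    have : (n - l).choose m = 0 := Nat.choose_eq_zero_of_lt (by omega)
    simp [this])]
  rw [key _ (fun m l hm hl hml => by
    have : (n - m).choose l = 0 := Nat.choose_eq_zero_of_lt (by omega)
    simp [this])]
  rw [Finset.sum_comm]
  refine Finset.sum_congr rfl fun m hm => Finset.sum_congr rfl fun l hl => ?_
  simp only [Finset.mem_range, Nat.lt_succ_iff] at hm hl
  by_cases h : l + m ≤ n
  · rw [choose_swap h]
  · have h1 : (n - l).choose m = 0 := Nat.choose_eq_zero_of_lt (by omega)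
    have h2 : (n - m).choose l = 0 := Nat.choose_eq_zero_of_lt (by omega)
    simp [h1, h2]



variable (f : ℕ → Polynomial ℝ)

lemma f_eval_zero (hf0 : f 0 = 1)
    (hbin : ∀ n : ℕ, ∀ x y : ℝ, (f n).eval (x + y) =
      ∑ j ∈ Finset.range (n + 1), (n.choose j : ℝ) * (f j).eval x * (f (n - j)).eval y) :
    ∀ n, 1 ≤ n → (f n).eval 0 = 0 := by
  intro n
  induction n using Nat.strong_induction_on with
  | _ n ih =>
    intro hn
    have h := hbin n 0 0
    rw [add_zero, Finset.sum_range_succ] at h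
    have hmid : ∑ j ∈ range n, (n.choose j : ℝ) * (f j).eval 0 * (f (n - j)).eval 0
        = (f n).eval 0 := by
      rw [Finset.sum_eq_single_of_mem 0 (Finset.mem_range.2 (by omega))]
      · simp [hf0]
      · intro j hj hj0
        have := ih j (Finset.mem_range.1 hj) (by omega)
        simp [this]
    rw [hmid, Nat.sub_self, hf0] at h
    simp at h
    linarith

lemma f_binP
    (hbin : ∀ n : ℕ, ∀ x y : ℝ, (f n).eval (x + y) =
      ∑ j ∈ Finset.range (n + 1), (n.choose j : ℝ) * (f j).eval x * (f (n - j)).eval y)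
    (n : ℕ) (c : ℝ) :
    (f n).comp (Polynomial.C c + X) =
      ∑ j ∈ range (n + 1), Polynomial.C ((n.choose j : ℝ) * (f j).eval c) * f (n - j) := by
  apply Polynomial.funext
  intro d
  rw [eval_comp, eval_finset_sum]
  simp only [eval_add, eval_C, eval_X, eval_mul]
  rw [hbin n c d]

lemma f_derivA
    (hbin : ∀ n : ℕ, ∀ x y : ℝ, (f n).eval (x + y) =
      ∑ j ∈ Finset.range (n + 1), (n.choose j : ℝ) * (f j).eval x * (f (n - j)).eval y)
    (n : ℕ) (u : ℝ) :
    (f n).derivative.eval u =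
      ∑ l ∈ range (n + 1), (n.choose l : ℝ) * ((f l).derivative.eval 0) * (f (n - l)).eval u := by
  have hp := congrArg derivative (f_binP f hbin n u)
  rw [derivative_comp] at hp
  simp only [derivative_add, derivative_C, derivative_X, zero_add, one_mul] at hp
  have h0 := congrArg (Polynomial.eval (0 : ℝ)) hp
  rw [eval_comp] at h0
  simp only [eval_add, eval_C, eval_X, add_zero] at h0
  rw [derivative_sum] at h0
  simp only [derivative_mul, derivative_C, zero_mul, zero_add, eval_finset_sum, eval_mul,
    eval_C] at h0
  rw [h0, ← Finset.sum_range_reflect]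
  refine Finset.sum_congr rfl fun j hj => ?_
  rw [Finset.mem_range, Nat.lt_succ_iff] at hj
  have e1 : n + 1 - 1 - j = n - j := by omega
  rw [e1, Nat.sub_sub_self hj, Nat.choose_symm hj]
  ring




lemma f_L3 (hf0 : f 0 = 1)
    (hbin : ∀ n : ℕ, ∀ x y : ℝ, (f n).eval (x + y) =
      ∑ j ∈ Finset.range (n + 1), (n.choose j : ℝ) * (f j).eval x * (f (n - j)).eval y) :
    ∀ n : ℕ, ∀ u : ℝ, (n : ℝ) * (f n).eval u =
      u * ∑ l ∈ range (n + 1),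
        (n.choose l : ℝ) * (l : ℝ) * ((f l).derivative.eval 0) * (f (n - l)).eval u := by
  have hbb0 : (f 0).derivative.eval 0 = 0 := by simp [hf0]
  intro n
  induction n using Nat.strong_induction_on with
  | _ n ih =>
  intro u
  set bb : ℕ → ℝ := fun l => (f l).derivative.eval 0 with hbb
  set W : Polynomial ℝ :=
    ∑ l ∈ range (n + 1), Polynomial.C ((n.choose l : ℝ) * (l : ℝ) * bb l) * f (n - l) with hW
  have hWe : ∀ v : ℝ, W.eval v =
      ∑ l ∈ range (n + 1), (n.choose l : ℝ) * (l : ℝ) * bb l * (f (n - l)).eval v := by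
    intro v; rw [hW, eval_finset_sum]; simp
  have hW'e : ∀ v : ℝ, W.derivative.eval v =
      ∑ l ∈ range (n + 1), (n.choose l : ℝ) * (l : ℝ) * bb l * (f (n - l)).derivative.eval v := by
    intro v; rw [hW, derivative_sum, eval_finset_sum]
    refine Finset.sum_congr rfl fun l _ => ?_
    rw [derivative_mul, derivative_C]
    simp
  set V : Polynomial ℝ := (n : ℝ) • f n - X * W with hV
  have hdV : derivative V = 0 := by
    apply Polynomial.funext; intro v
    rw [hV, derivative_sub, derivative_smul, derivative_mul, derivative_X]
    simp only [one_mul, eval_sub, eval_add, eval_smul, eval_mul, eval_X, smul_eq_mul, eval_zero]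
    have key : v * W.derivative.eval v =
        ∑ m ∈ range (n + 1), (n.choose m : ℝ) * bb m * ((n - m : ℕ) : ℝ) * (f (n - m)).eval v := by
      have step1 : v * W.derivative.eval v =
          ∑ l ∈ range (n + 1), ∑ m ∈ range (n - l + 1),
            (n.choose l : ℝ) * ((n - l).choose m : ℝ) *
              ((l : ℝ) * bb l * bb m * (v * (f (n - l - m)).eval v)) := by
        rw [hW'e, Finset.mul_sum]
        refine Finset.sum_congr rfl fun l _ => ?_
        rw [f_derivA f hbin (n - l) v, Finset.mul_sum, Finset.mul_sum]
        exact Finset.sum_congr rfl fun m _ => by ring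
      rw [step1, sum_choose_swap n (fun l m => (l : ℝ) * bb l * bb m * (v * (f (n - l - m)).eval v))]
      refine Finset.sum_congr rfl fun m hm => ?_
      rw [Finset.mem_range, Nat.lt_succ_iff] at hm
      by_cases hm0 : m = 0
      · subst hm0
        have hb0 : bb 0 = 0 := hbb0
        simp [hb0]
      · have hIH := ih (n - m) (by omega) v
        calc ∑ l ∈ range (n - m + 1), (n.choose m : ℝ) * ((n - m).choose l : ℝ) *
                ((l : ℝ) * bb l * bb m * (v * (f (n - l - m)).eval v))
            = (n.choose m : ℝ) * bb m * (v * ∑ l ∈ range ((n - m) + 1),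
                ((n - m).choose l : ℝ) * (l : ℝ) * bb l * (f ((n - m) - l)).eval v) := by
              rw [Finset.mul_sum, Finset.mul_sum]
              refine Finset.sum_congr rfl fun l _ => ?_
              have e : n - l - m = n - m - l := by omega
              rw [e]; ring
          _ = (n.choose m : ℝ) * bb m * ((n - m : ℕ) : ℝ) * (f (n - m)).eval v := by
              rw [← hIH]; ring
    rw [key, f_derivA f hbin n v, hWe, Finset.mul_sum, ← Finset.sum_add_distrib,
      ← Finset.sum_sub_distrib]
    refine Finset.sum_eq_zero fun l hl => ?_
    rw [Finset.mem_range, Nat.lt_succ_iff] at hl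
    rw [Nat.cast_sub hl]
    ring
  have hVC := Polynomial.eq_C_of_derivative_eq_zero hdV
  have hV0 : V.eval 0 = 0 := by
    rw [hV]
    simp only [eval_sub, eval_smul, eval_mul, eval_X, zero_mul, smul_eq_mul, sub_zero]
    by_cases hn : n = 0
    · subst hn; simp
    · rw [f_eval_zero f hf0 hbin n (by omega)]; ring
  have hVu : V.eval u = 0 := by
    rw [hVC] at hV0 ⊢
    simpa using hV0
  rw [hV] at hVu
  simp only [eval_sub, eval_smul, eval_mul, eval_X, smul_eq_mul] at hVu
  rw [hWe u] at hVu
  linarith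







variable (f : ℕ → Polynomial ℝ) (hf0 : f 0 = 1)
    (hbin : ∀ n : ℕ, ∀ x y : ℝ, (f n).eval (x + y) =
      ∑ j ∈ Finset.range (n + 1), (n.choose j : ℝ) * (f j).eval x * (f (n - j)).eval y)
    (a : ℝ) (F : ℕ → Polynomial ℝ) (hF0 : F 0 = 1)
    (hF : ∀ n : ℕ, 1 ≤ n → ∀ x : ℝ, (a * n + x) * (F n).eval x = x * (f n).eval (a * n + x))

include hf0 hbin in
lemma f_X_mul : ∀ m, 1 ≤ m → f m = X * (f m).divX := by
  intro m hm
  have h0 : (f m).coeff 0 = 0 := by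
    rw [Polynomial.coeff_zero_eq_eval_zero]
    exact f_eval_zero f hf0 hbin m hm
  conv_lhs => rw [← Polynomial.X_mul_divX_add (f m)]
  rw [h0, map_zero, add_zero]

include hf0 hbin hF in
lemma F_poly : ∀ m, 1 ≤ m → F m = X * ((f m).divX.comp (X + C (a * m))) := by
  intro m hm
  have key : (C (a * m) + X) * F m = (C (a * m) + X) * (X * ((f m).divX.comp (X + C (a * m)))) := by
    apply Polynomial.funext
    intro y
    simp only [eval_mul, eval_add, eval_C, eval_X, eval_comp]
    rw [hF m hm y]
    have := f_X_mul f hf0 hbin m hm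
    conv_lhs => rw [this]
    simp only [eval_mul, eval_X]
    ring
  have hne : (C (a * m) + X : Polynomial ℝ) ≠ 0 := by
    intro h
    have := Polynomial.X_add_C_ne_zero (a * m)
    rw [add_comm] at h
    exact this h
  exact mul_left_cancel₀ hne key

include hf0 hbin hF hF0 in
lemma F_eval : ∀ m, ∀ y : ℝ, (F m).eval y =
    (if m = 0 then 1 else y * ((f m).divX).eval (y + a * m)) := by
  intro m y
  by_cases hm : m = 0
  · subst hm; simp [hF0]
  · rw [if_neg hm, F_poly f hf0 hbin a F hF m (by omega)]
    simp [eval_comp, add_comm]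

include hf0 hbin in
lemma g_derivL' : ∀ n : ℕ, ∀ u : ℝ, (n : ℝ) * ((f n).divX).derivative.eval u =
    ∑ l ∈ range (n + 1), (n.choose l : ℝ) * ((n : ℝ) - (l : ℝ)) * ((f l).derivative.eval 0) *
      ((f (n - l)).divX).eval u := by
  intro n
  have hbb0 : (f 0).derivative.eval 0 = 0 := by simp [hf0]
  by_cases hn : n = 0
  · subst hn; intro u; simp [hbb0]
  -- polynomial identity with X^2 cancelled
  have key : X ^ 2 * ((n : ℝ) • ((f n).divX).derivative) =
      X ^ 2 * (∑ l ∈ range (n + 1),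
        C ((n.choose l : ℝ) * ((n : ℝ) - (l : ℝ)) * ((f l).derivative.eval 0)) * (f (n - l)).divX) := by
    apply Polynomial.funext
    intro u
    simp only [eval_mul, eval_pow, eval_X, eval_smul, smul_eq_mul, eval_finset_sum, eval_C]
    -- u^2 * (n * g'_n(u)) = u^2 * Σ ...
    -- use: u^2 g'_n(u) = u f'_n(u) - f_n(u)
    have hXg := f_X_mul f hf0 hbin n (by omega)
    have hfd : (f n).derivative = (f n).divX + X * ((f n).divX).derivative := by
      conv_lhs => rw [hXg]
      rw [derivative_mul, derivative_X]; ring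
    have hXgu : (f n).eval u = u * ((f n).divX).eval u := by
      conv_lhs => rw [hXg]
      simp [eval_mul]
    have hsq : u ^ 2 * ((f n).divX).derivative.eval u = u * (f n).derivative.eval u - (f n).eval u := by
      rw [hfd, hXgu]
      simp only [eval_add, eval_mul, eval_X]
      ring
    have h1 : u ^ 2 * ((n : ℝ) * ((f n).divX).derivative.eval u)
        = (n : ℝ) * (u * (f n).derivative.eval u) - (n : ℝ) * (f n).eval u := by
      linear_combination (n : ℝ) * hsq
    rw [h1, f_derivA f hbin n u, f_L3 f hf0 hbin n u, Finset.mul_sum, Finset.mul_sum,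
      Finset.mul_sum, ← Finset.sum_sub_distrib, Finset.mul_sum]
    refine Finset.sum_congr rfl fun l hl => ?_
    rw [Finset.mem_range, Nat.lt_succ_iff] at hl
    by_cases hln : l = n
    · subst hln
      simp [hbb0, Nat.sub_self, hf0]
      ring
    · have h2 : f (n - l) = X * (f (n - l)).divX := f_X_mul f hf0 hbin (n - l) (by omega)
      conv_lhs => rw [h2]
      simp only [eval_mul, eval_X]
      ring
  have hc := mul_left_cancel₀ (pow_ne_zero 2 (Polynomial.X_ne_zero (R := ℝ))) key
  intro u
  have := congrArg (Polynomial.eval u) hc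
  simpa [eval_finset_sum, smul_eq_mul] using this










include hf0 hbin hF0 hF in
lemma F_derivL : ∀ n : ℕ, ∀ x : ℝ, (F n).derivative.eval x =
    ∑ l ∈ range (n + 1), (n.choose l : ℝ) * ((f l).derivative.eval 0) *
      (F (n - l)).eval (x + a * l) := by
  have hbb0 : (f 0).derivative.eval 0 = 0 := by simp [hf0]
  intro n x
  by_cases hn : n = 0
  · subst hn; simp [hF0, hbb0]
  have hLHS : (F n).derivative.eval x =
      ((f n).divX).eval (x + a * n) + x * ((f n).divX).derivative.eval (x + a * n) := by
    rw [F_poly f hf0 hbin a F hF n (by omega)]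
    rw [derivative_mul, derivative_X, one_mul, Polynomial.derivative_comp]
    simp only [derivative_add, derivative_X, derivative_C, add_zero, eval_add, eval_mul,
      eval_comp, eval_X, eval_C, one_mul]
  have hK1 : (f n).derivative.eval (x + a * n) =
      ((f n).divX).eval (x + a * n) + (x + a * n) * ((f n).divX).derivative.eval (x + a * n) := by
    conv_lhs => rw [f_X_mul f hf0 hbin n (by omega)]
    rw [derivative_mul, derivative_X, one_mul]
    simp only [eval_add, eval_mul, eval_X]
  have hA := f_derivA f hbin n (x + a * n)
  have hLp := g_derivL' f hf0 hbin n (x + a * n)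
  have hR : ∑ l ∈ range (n + 1), (n.choose l : ℝ) * ((f l).derivative.eval 0) *
        (F (n - l)).eval (x + a * l)
      = (∑ l ∈ range (n + 1), (n.choose l : ℝ) * ((f l).derivative.eval 0) *
          (f (n - l)).eval (x + a * n))
        - a * ∑ l ∈ range (n + 1), (n.choose l : ℝ) * ((n : ℝ) - (l : ℝ)) *
            ((f l).derivative.eval 0) * ((f (n - l)).divX).eval (x + a * n) := by
    rw [Finset.mul_sum, ← Finset.sum_sub_distrib]
    refine Finset.sum_congr rfl fun l hl => ?_
    rw [Finset.mem_range, Nat.lt_succ_iff] at hl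
    by_cases hln : l = n
    · subst hln
      simp only [Nat.sub_self, hF0, hf0, Polynomial.eval_one]
      ring
    · rw [F_eval f hf0 hbin a F hF0 hF (n - l)]
      rw [if_neg (by omega)]
      rw [Nat.cast_sub hl]
      rw [show x + a * (l : ℝ) + a * ((n : ℝ) - (l : ℝ)) = x + a * n by ring]
      have hfe : (f (n - l)).eval (x + a * n) =
          (x + a * n) * ((f (n - l)).divX).eval (x + a * n) := by
        conv_lhs => rw [f_X_mul f hf0 hbin (n - l) (by omega)]
        simp [eval_mul]
      rw [hfe]
      ring
  rw [hLHS, hR]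
  linear_combination -hK1 + hA - a * hLp







include hf0 hbin hF0 hF in
lemma F_eval_zero : ∀ m, 1 ≤ m → (F m).eval 0 = 0 := by
  intro m hm
  rw [F_eval f hf0 hbin a F hF0 hF m 0, if_neg (by omega), zero_mul]

include hf0 hbin hF0 hF in
lemma F_bin : ∀ n : ℕ, ∀ c d : ℝ, (F n).eval (c + d) =
    ∑ j ∈ range (n + 1), (n.choose j : ℝ) * (F j).eval c * (F (n - j)).eval d := by
  have hbb0 : (f 0).derivative.eval 0 = 0 := by simp [hf0]
  intro n
  induction n using Nat.strong_induction_on with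
  | _ n ih =>
  intro c d
  by_cases hn : n = 0
  · subst hn; simp [hF0]
  set P : Polynomial ℝ := (F n).comp (C c + X) with hP
  set Q : Polynomial ℝ :=
    ∑ j ∈ range (n + 1), C ((n.choose j : ℝ) * (F j).eval c) * F (n - j) with hQ
  have hQe : ∀ v : ℝ, Q.eval v =
      ∑ j ∈ range (n + 1), (n.choose j : ℝ) * (F j).eval c * (F (n - j)).eval v := by
    intro v; rw [hQ, eval_finset_sum]; simp [mul_assoc]
  have hdPQ : derivative P = derivative Q := by
    apply Polynomial.funext
    intro v
    have hdP : (derivative P).eval v = (F n).derivative.eval (c + v) := by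
      rw [hP, Polynomial.derivative_comp]
      simp [eval_comp]
    have hdQ : (derivative Q).eval v =
        ∑ j ∈ range (n + 1), (n.choose j : ℝ) * (F j).eval c * (F (n - j)).derivative.eval v := by
      rw [hQ, derivative_sum, eval_finset_sum]
      refine Finset.sum_congr rfl fun j _ => ?_
      rw [derivative_mul, derivative_C]
      simp [mul_assoc]
    rw [hdP, hdQ, F_derivL f hf0 hbin a F hF0 hF n (c + v)]
    have lhs_eq : ∑ l ∈ range (n + 1), (n.choose l : ℝ) * ((f l).derivative.eval 0) *
          (F (n - l)).eval (c + v + a * l)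
        = ∑ l ∈ range (n + 1), ∑ j ∈ range (n - l + 1),
            (n.choose l : ℝ) * ((n - l).choose j : ℝ) *
              (((f l).derivative.eval 0) * ((F j).eval c * (F (n - l - j)).eval (v + a * l))) := by
      refine Finset.sum_congr rfl fun l hl => ?_
      rw [Finset.mem_range, Nat.lt_succ_iff] at hl
      by_cases hl0 : l = 0
      · subst hl0; simp [hbb0]
      · have hIH := ih (n - l) (by omega) c (v + a * l)
        rw [show c + v + a * (l : ℝ) = c + (v + a * l) by ring, hIH, Finset.mul_sum]
        refine Finset.sum_congr rfl fun j _ => by ring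
    rw [lhs_eq,
      sum_choose_swap n (fun l j => ((f l).derivative.eval 0) *
        ((F j).eval c * (F (n - l - j)).eval (v + a * l)))]
    refine Finset.sum_congr rfl fun j hj => ?_
    rw [Finset.mem_range, Nat.lt_succ_iff] at hj
    rw [F_derivL f hf0 hbin a F hF0 hF (n - j) v, Finset.mul_sum]
    refine Finset.sum_congr rfl fun l hl => ?_
    rw [Finset.mem_range, Nat.lt_succ_iff] at hl
    rw [show n - l - j = n - j - l by omega]
    ring
  have hsub : P - Q = C ((P - Q).coeff 0) :=
    Polynomial.eq_C_of_derivative_eq_zero (by rw [derivative_sub, hdPQ, sub_self])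
  have h00 : P.eval 0 = Q.eval 0 := by
    rw [hP, hQe 0, eval_comp]
    simp only [eval_add, eval_C, eval_X, add_zero]
    rw [Finset.sum_range_succ]
    have hzero : ∑ j ∈ range n, (n.choose j : ℝ) * (F j).eval c * (F (n - j)).eval 0 = 0 := by
      refine Finset.sum_eq_zero fun j hj => ?_
      rw [Finset.mem_range] at hj
      rw [F_eval_zero f hf0 hbin a F hF0 hF (n - j) (by omega), mul_zero]
    rw [hzero, Nat.sub_self, hF0, Nat.choose_self]
    simp
  have hPQ : P = Q := by
    have hc0 : (P - Q).coeff 0 = 0 := by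
      rw [Polynomial.coeff_zero_eq_eval_zero, eval_sub, h00, sub_self]
    have := hsub
    rw [hc0, map_zero, sub_eq_zero] at this
    exact this
  have := congrArg (Polynomial.eval d) hPQ
  rw [hP, eval_comp] at this
  simp only [eval_add, eval_C, eval_X] at this
  rw [this, hQe d]







/-- iterated derivative commutes with composition by `C c + X` -/
lemma iter_deriv_comp (i : ℕ) (p : Polynomial ℝ) (c : ℝ) :
    Polynomial.derivative^[i] (p.comp (Polynomial.C c + X)) =
      (Polynomial.derivative^[i] p).comp (Polynomial.C c + X) := by
  induction i generalizing p with
  | zero => simp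
  | succ i ih =>
    rw [Function.iterate_succ_apply, Function.iterate_succ_apply, Polynomial.derivative_comp]
    simp only [derivative_add, derivative_C, derivative_X, zero_add, one_mul]
    exact ih _

-- i-fold differentiated binomial identity (derivatives on second slot)
include hf0 hbin hF0 hF in
lemma F_bin_i (i : ℕ) : ∀ n : ℕ, ∀ c d : ℝ,
    (Polynomial.derivative^[i] (F n)).eval (c + d) =
      ∑ j ∈ range (n + 1), (n.choose j : ℝ) * (F j).eval c *
        (Polynomial.derivative^[i] (F (n - j))).eval d := by
  intro n c d
  have hpoly : (F n).comp (Polynomial.C c + X) =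
      ∑ j ∈ range (n + 1), Polynomial.C ((n.choose j : ℝ) * (F j).eval c) * F (n - j) := by
    apply Polynomial.funext; intro v
    rw [eval_comp, eval_finset_sum]
    simp only [eval_add, eval_C, eval_X, eval_mul]
    rw [F_bin f hf0 hbin a F hF0 hF n c v]
  have hd := congrArg (Polynomial.derivative^[i]) hpoly
  rw [iter_deriv_comp] at hd
  have hd2 := congrArg (Polynomial.eval d) hd
  rw [eval_comp] at hd2
  simp only [eval_add, eval_C, eval_X] at hd2
  rw [hd2]
  rw [show Polynomial.derivative^[i] (∑ j ∈ range (n + 1),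
      Polynomial.C ((n.choose j : ℝ) * (F j).eval c) * F (n - j)) =
    ∑ j ∈ range (n + 1),
      Polynomial.C ((n.choose j : ℝ) * (F j).eval c) * Polynomial.derivative^[i] (F (n - j)) from ?_]
  · rw [eval_finset_sum]
    simp [mul_assoc]
  · rw [Polynomial.iterate_derivative_sum]
    exact Finset.sum_congr rfl fun j _ => by
      rw [Polynomial.iterate_derivative_C_mul]

-- differentiate once more, in the first slot
include hf0 hbin hF0 hF in
lemma F_bin_i' (i : ℕ) : ∀ n : ℕ, ∀ c d : ℝ,
    (Polynomial.derivative^[i + 1] (F n)).eval (c + d) =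
      ∑ j ∈ range (n + 1), (n.choose j : ℝ) * (F j).derivative.eval c *
        (Polynomial.derivative^[i] (F (n - j))).eval d := by
  intro n c d
  have hpoly : (Polynomial.derivative^[i] (F n)).comp (X + Polynomial.C d) =
      ∑ j ∈ range (n + 1),
        Polynomial.C ((n.choose j : ℝ) * (Polynomial.derivative^[i] (F (n - j))).eval d) * F j := by
    apply Polynomial.funext; intro v
    rw [eval_comp, eval_finset_sum]
    simp only [eval_add, eval_C, eval_X, eval_mul]
    rw [F_bin_i f hf0 hbin a F hF0 hF i n v d]
    exact Finset.sum_congr rfl fun j _ => by ring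
  have hd := congrArg Polynomial.derivative hpoly
  rw [Polynomial.derivative_comp] at hd
  simp only [derivative_add, derivative_C, derivative_X, add_zero, one_mul] at hd
  rw [derivative_sum] at hd
  have hd2 := congrArg (Polynomial.eval c) hd
  rw [eval_comp] at hd2
  simp only [eval_add, eval_C, eval_X, eval_finset_sum] at hd2
  rw [← Function.iterate_succ_apply' Polynomial.derivative i (F n)] at hd2
  rw [hd2]
  refine Finset.sum_congr rfl fun j _ => ?_
  rw [derivative_mul, derivative_C]
  simp
  ring

/-- the EGF-style power series of the i-th derivatives of F evaluated at c -/
noncomputable def Gs (F : ℕ → Polynomial ℝ) (i : ℕ) (c : ℝ) : PowerSeries ℝ :=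
  PowerSeries.mk fun m => (Polynomial.derivative^[i] (F m)).eval c / m.factorial

include hf0 hbin hF0 hF in
lemma Gs_mul (i : ℕ) (c d : ℝ) : Gs F 0 c * Gs F i d = Gs F i (c + d) := by
  apply PowerSeries.ext; intro n
  rw [PowerSeries.coeff_mul, Finset.Nat.sum_antidiagonal_eq_sum_range_succ_mk]
  simp only [Gs, PowerSeries.coeff_mk, Function.iterate_zero_apply]
  rw [F_bin_i f hf0 hbin a F hF0 hF i n c d, Finset.sum_div]
  refine Finset.sum_congr rfl fun j hj => ?_
  rw [Finset.mem_range, Nat.lt_succ_iff] at hj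
  rw [Nat.cast_choose ℝ hj]
  have h1 : (Nat.factorial j : ℝ) ≠ 0 := Nat.cast_ne_zero.2 (Nat.factorial_ne_zero _)
  have h2 : (Nat.factorial (n - j) : ℝ) ≠ 0 := Nat.cast_ne_zero.2 (Nat.factorial_ne_zero _)
  have h3 : (Nat.factorial n : ℝ) ≠ 0 := Nat.cast_ne_zero.2 (Nat.factorial_ne_zero _)
  field_simp

include hf0 hbin hF0 hF in
lemma Gs_mul' (i : ℕ) (c d : ℝ) : Gs F 1 c * Gs F i d = Gs F (i + 1) (c + d) := by
  apply PowerSeries.ext; intro n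
  rw [PowerSeries.coeff_mul, Finset.Nat.sum_antidiagonal_eq_sum_range_succ_mk]
  simp only [Gs, PowerSeries.coeff_mk, Function.iterate_one]
  rw [F_bin_i' f hf0 hbin a F hF0 hF i n c d, Finset.sum_div]
  refine Finset.sum_congr rfl fun j hj => ?_
  rw [Finset.mem_range, Nat.lt_succ_iff] at hj
  rw [Nat.cast_choose ℝ hj]
  have h1 : (Nat.factorial j : ℝ) ≠ 0 := Nat.cast_ne_zero.2 (Nat.factorial_ne_zero _)
  have h2 : (Nat.factorial (n - j) : ℝ) ≠ 0 := Nat.cast_ne_zero.2 (Nat.factorial_ne_zero _)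
  have h3 : (Nat.factorial n : ℝ) ≠ 0 := Nat.cast_ne_zero.2 (Nat.factorial_ne_zero _)
  field_simp

include hf0 hbin hF0 hF in
lemma Gs_zero : Gs F 0 0 = 1 := by
  apply PowerSeries.ext; intro n
  rw [PowerSeries.coeff_one]
  simp only [Gs, PowerSeries.coeff_mk, Function.iterate_zero_apply]
  by_cases hn : n = 0
  · subst hn; simp [hF0]
  · rw [if_neg hn, F_eval_zero f hf0 hbin a F hF0 hF n (by omega), zero_div]

include hf0 hbin hF0 hF in
lemma Gs_pow_one (x : ℝ) : ∀ i : ℕ, (Gs F 1 x) ^ i = Gs F i ((i : ℝ) * x) := by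
  intro i
  induction i with
  | zero => simpa using (Gs_zero f hf0 hbin a F hF0 hF).symm
  | succ i ih =>
    rw [pow_succ, mul_comm, ih, Gs_mul' f hf0 hbin a F hF0 hF i x ((i : ℝ) * x)]
    congr 1
    push_cast; ring

include hf0 hbin hF0 hF in
lemma Gs_pow_zero (x : ℝ) : ∀ j : ℕ, ∀ i : ℕ, ∀ c : ℝ,
    (Gs F 0 x) ^ j * Gs F i c = Gs F i ((j : ℝ) * x + c) := by
  intro j
  induction j with
  | zero => intro i c; simp
  | succ j ih =>
    intro i c
    rw [pow_succ, mul_assoc, Gs_mul f hf0 hbin a F hF0 hF i x c, ih i (x + c)]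
    congr 1
    push_cast; ring

include hf0 hbin hF0 hF in
lemma Gs_pow_mix (x : ℝ) (i k : ℕ) (hik : i ≤ k) :
    (Gs F 0 x) ^ (k - i) * (Gs F 1 x) ^ i = Gs F i ((k : ℝ) * x) := by
  rw [Gs_pow_one f hf0 hbin a F hF0 hF x i,
    Gs_pow_zero f hf0 hbin a F hF0 hF x (k - i) i ((i : ℝ) * x)]
  congr 1
  rw [Nat.cast_sub hik]
  ring



noncomputable def Lop (α : ℝ) : Polynomial ℝ → Polynomial ℝ :=
  fun P => Polynomial.C α * P + Polynomial.derivative P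

lemma deriv_exp_poly (α c : ℝ) (P : Polynomial ℝ) :
    deriv (fun z => Real.exp (α * z) * P.eval (c + z)) =
      fun z => Real.exp (α * z) * (Lop α P).eval (c + z) := by
  funext z₀
  have h1 : HasDerivAt (fun z : ℝ => Real.exp (α * z)) (α * Real.exp (α * z₀)) z₀ := by
    have := (Real.hasDerivAt_exp (α * z₀)).comp z₀ ((hasDerivAt_id z₀).const_mul α)
    simpa [mul_comm, Function.comp_def] using this
  have h2 : HasDerivAt (fun z : ℝ => P.eval (c + z)) (P.derivative.eval (c + z₀)) z₀ := by
    have := (P.hasDerivAt (c + z₀)).comp z₀ ((hasDerivAt_const z₀ c).add (hasDerivAt_id z₀))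
    simpa [Function.comp_def] using this
  have := (h1.mul h2).deriv
  rw [show (fun z => Real.exp (α * z) * P.eval (c + z)) =
    (fun z => Real.exp (α * z)) * (fun z => P.eval (c + z)) from rfl, this, Lop]
  simp only [eval_add, eval_mul, eval_C]
  ring

lemma iteratedDeriv_exp_poly (α : ℝ) :
    ∀ (k : ℕ) (P : Polynomial ℝ) (c : ℝ),
      iteratedDeriv k (fun z => Real.exp (α * z) * P.eval (c + z)) 0 =
        ((Lop α)^[k] P).eval c := by
  intro k
  induction k with
  | zero => intro P c; simp
  | succ k ih =>
    intro P c
    rw [iteratedDeriv_succ', deriv_exp_poly α c P, ih (Lop α P) c,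
      ← Function.iterate_succ_apply]

lemma Lop_pow (α : ℝ) : ∀ (k : ℕ) (P : Polynomial ℝ),
    (Lop α)^[k] P = ∑ i ∈ range (k + 1),
      Polynomial.C ((k.choose i : ℝ) * α ^ (k - i)) * Polynomial.derivative^[i] P := by
  intro k
  induction k with
  | zero => intro P; simp
  | succ k ih =>
    intro P
    rw [Function.iterate_succ_apply', ih P, Lop]
    rw [Finset.mul_sum, derivative_sum]
    have hder : ∀ i ∈ range (k + 1),
        Polynomial.derivative (Polynomial.C ((k.choose i : ℝ) * α ^ (k - i)) *
          Polynomial.derivative^[i] P)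
        = Polynomial.C ((k.choose i : ℝ) * α ^ (k - i)) * Polynomial.derivative^[i + 1] P := by
      intro i _
      rw [derivative_mul, derivative_C, Function.iterate_succ_apply']
      ring
    rw [Finset.sum_congr rfl hder]
    -- LHS : ∑ C α * (C c_i * D^i P) + ∑ C c_i * D^(i+1) P
    -- RHS : ∑_{i ∈ range (k+2)} C (choose (k+1) i * α^(k+1-i)) * D^i P
    rw [Finset.sum_range_succ' (fun i => Polynomial.C (((k+1).choose i : ℝ) * α ^ (k + 1 - i)) *
      Polynomial.derivative^[i] P) (k + 1)]
    rw [Finset.sum_range_succ (fun i => Polynomial.C ((k.choose i : ℝ) * α ^ (k - i)) *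
      Polynomial.derivative^[i + 1] P) k]
    rw [Finset.sum_range_succ' (fun i => Polynomial.C α *
      (Polynomial.C ((k.choose i : ℝ) * α ^ (k - i)) * Polynomial.derivative^[i] P)) k]
    have e1 : ∀ i, i < k →
        Polynomial.C α * (Polynomial.C ((k.choose (i+1) : ℝ) * α ^ (k - (i+1))) *
            Polynomial.derivative^[i+1] P)
          + Polynomial.C ((k.choose i : ℝ) * α ^ (k - i)) * Polynomial.derivative^[i + 1] P
        = Polynomial.C (((k+1).choose (i+1) : ℝ) * α ^ (k + 1 - (i+1))) *
            Polynomial.derivative^[i+1] P := by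
      intro i hi
      rw [← mul_assoc, ← Polynomial.C_mul, ← add_mul, ← Polynomial.C_add]
      congr 2
      rw [Nat.choose_succ_succ (k) (i)]
      push_cast
      have h1 : k - (i + 1) + 1 = k - i := by omega
      have h2 : k + 1 - (i + 1) = k - i := by omega
      rw [← h1, pow_succ]
      ring
    rw [Finset.sum_range_succ (fun i => Polynomial.C (((k+1).choose (i+1) : ℝ) *
      α ^ (k + 1 - (i+1))) * Polynomial.derivative^[i+1] P) k]
    have hsum : (∑ i ∈ range k, Polynomial.C α * (Polynomial.C ((k.choose (i+1) : ℝ) *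
          α ^ (k - (i+1))) * Polynomial.derivative^[i+1] P))
        + ∑ i ∈ range k, Polynomial.C ((k.choose i : ℝ) * α ^ (k - i)) *
            Polynomial.derivative^[i+1] P
        = ∑ i ∈ range k, Polynomial.C (((k+1).choose (i+1) : ℝ) * α ^ (k + 1 - (i+1))) *
            Polynomial.derivative^[i+1] P := by
      rw [← Finset.sum_add_distrib]
      exact Finset.sum_congr rfl fun i hi => e1 i (Finset.mem_range.1 hi)
    have ht0 : Polynomial.C α * (Polynomial.C ((k.choose 0 : ℝ) * α ^ (k - 0)) *
          Polynomial.derivative^[0] P)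
        = Polynomial.C (((k+1).choose 0 : ℝ) * α ^ (k + 1 - 0)) * Polynomial.derivative^[0] P := by
      have harg : α * ((k.choose 0 : ℝ) * α ^ (k - 0)) =
          ((k+1).choose 0 : ℝ) * α ^ (k + 1 - 0) := by
        simp [pow_succ]
        ring
      rw [← mul_assoc, ← Polynomial.C_mul, harg]
    have htk : Polynomial.C ((k.choose k : ℝ) * α ^ (k - k)) * Polynomial.derivative^[k+1] P
        = Polynomial.C (((k+1).choose (k+1) : ℝ) * α ^ (k + 1 - (k+1))) *
            Polynomial.derivative^[k+1] P := by
      simp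
    rw [ht0, htk, ← hsum]
    ring


end Stmt6Aux

open Stmt6Aux Polynomial in
theorem stmt_6 (f : ℕ → Polynomial ℝ) (hf0 : f 0 = 1) (hdeg : ∀ n, (f n).natDegree = n)
    (hbin : ∀ n : ℕ, ∀ x y : ℝ, (f n).eval (x + y) =
      ∑ j ∈ Finset.range (n + 1), (n.choose j : ℝ) * (f j).eval x * (f (n - j)).eval y)
    (a : ℝ) (F : ℕ → Polynomial ℝ) (hF0 : F 0 = 1)
    (hF : ∀ n : ℕ, 1 ≤ n → ∀ x : ℝ, (a * n + x) * (F n).eval x = x * (f n).eval (a * n + x))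
    (α x : ℝ) (n k : ℕ) (hk : 1 ≤ k) (hkn : k ≤ n) :
    bellB n k
        (fun m => (m : ℝ) *
          deriv (fun z => Real.exp (α * z) * (F (m - 1)).eval (x + z)) 0) =
      (n.choose k : ℝ) *
        iteratedDeriv k (fun z => Real.exp (α * z) * (F (n - k)).eval ((k : ℝ) * x + z)) 0 := by
  have hu : ∀ m : ℕ, deriv (fun z => Real.exp (α * z) * (F (m - 1)).eval (x + z)) 0
      = (Lop α (F (m - 1))).eval x := by
    intro m
    rw [deriv_exp_poly α x (F (m - 1))]
    simp
  set A : PowerSeries ℝ := PowerSeries.C α * Gs F 0 x + Gs F 1 x with hA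
  have hAco : ∀ j : ℕ, PowerSeries.coeff j A = (Lop α (F j)).eval x / j.factorial := by
    intro j
    rw [hA, map_add, PowerSeries.coeff_C_mul]
    simp only [Gs, PowerSeries.coeff_mk, Function.iterate_zero_apply, Function.iterate_one, Lop,
      eval_add, eval_mul, eval_C]
    ring
  have hmk : (PowerSeries.mk fun m => if m = 0 then 0 else
        ((m : ℝ) * deriv (fun z => Real.exp (α * z) * (F (m - 1)).eval (x + z)) 0) /
          (Nat.factorial m : ℝ))
      = PowerSeries.X * A := by
    apply PowerSeries.ext; intro m
    cases m with
    | zero =>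
      simp [PowerSeries.coeff_zero_eq_constantCoeff]
    | succ m =>
      rw [PowerSeries.coeff_succ_X_mul, PowerSeries.coeff_mk, if_neg (Nat.succ_ne_zero m),
        hu (m + 1), hAco m]
      simp only [Nat.add_sub_cancel]
      rw [Nat.factorial_succ]
      have h1 : (Nat.factorial m : ℝ) ≠ 0 := Nat.cast_ne_zero.2 (Nat.factorial_ne_zero _)
      push_cast
      field_simp
  have hApow : A ^ k = ∑ i ∈ range (k + 1),
      PowerSeries.C ((k.choose i : ℝ) * α ^ (k - i)) * Gs F i ((k : ℝ) * x) := by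
    rw [hA, add_comm, add_pow]
    refine Finset.sum_congr rfl fun i hi => ?_
    rw [Finset.mem_range, Nat.lt_succ_iff] at hi
    rw [mul_pow, ← Gs_pow_mix f hf0 hbin a F hF0 hF x i k hi, ← map_pow,
      ← map_natCast (PowerSeries.C (R := ℝ)) (k.choose i), map_mul]
    ring
  -- now compute both sides
  rw [bellB, hmk]
  rw [iteratedDeriv_exp_poly α k (F (n - k)) ((k : ℝ) * x), Lop_pow]
  rw [mul_pow]
  have hco : (PowerSeries.coeff n) (PowerSeries.X ^ k * A ^ k)
      = PowerSeries.coeff (n - k) (A ^ k) := by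
    rw [PowerSeries.coeff_X_pow_mul', if_pos hkn]
  rw [hco, hApow, map_sum]
  have hterm : ∀ i ∈ range (k + 1),
      (PowerSeries.coeff (n - k)) (PowerSeries.C ((k.choose i : ℝ) * α ^ (k - i)) *
        Gs F i ((k : ℝ) * x))
      = ((k.choose i : ℝ) * α ^ (k - i)) *
          ((Polynomial.derivative^[i] (F (n - k))).eval ((k : ℝ) * x)) / (n - k).factorial := by
    intro i _
    rw [PowerSeries.coeff_C_mul]
    simp only [Gs, PowerSeries.coeff_mk]
    ring
  rw [Finset.sum_congr rfl hterm, eval_finset_sum]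
  simp only [eval_mul, eval_C]
  rw [← Finset.sum_div, Nat.cast_choose ℝ hkn]
  have h1 : (Nat.factorial k : ℝ) ≠ 0 := Nat.cast_ne_zero.2 (Nat.factorial_ne_zero _)
  have h2 : (Nat.factorial (n - k) : ℝ) ≠ 0 := Nat.cast_ne_zero.2 (Nat.factorial_ne_zero _)
  have h3 : (Nat.factorial n : ℝ) ≠ 0 := Nat.cast_ne_zero.2 (Nat.factorial_ne_zero _)
  field_simp
end

section
/- Let (f_n(x)) be a sequence of binomial type with f₀ = 1, a real, and f_n(x; a) := (x/(an + x)) f_n(an + x), f₀(x; a) := 1. Then the sequence (f_n(x; a))_{n≥0} is again of binomial type, i.e. f_n(x + y; a) = ∑_{j=0}^n C(n,j) f_j(x; a) f_{n-j}(y; a) for all n ≥ 0 and all x, y (with an + x, aj + x, a(n-j) + y nonzero so the expressions are defined; as polynomial identities after clearing denominators). -/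
/-!
Let `Φ_c = ∑ fₙ(c) tⁿ/n!`. Being of binomial type means `Φ_{c+d} = Φ_c Φ_d`; since the
coefficients of `Φ_c` are polynomial in `c`, this forces `Φ_c' = c g' Φ_c` (that is,
`Φ_c = exp (c g)`). Let `v` be the compositional inverse of `t / Φ_a`. Lagrange inversion gives
`[tⁿ] Φ_c(v) = (1/n) [tⁿ⁻¹] Φ_c' Φ_aⁿ = c/(c + a n) · fₙ(c + a n)/n!`, so `Φ_c(v)` is the
exponential generating function of `Fₙ(c)`, and it is still multiplicative in `c`.
-/

open Finset

open PowerSeries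
open scoped Polynomial

namespace PowerSeries

theorem derivative_map {R S : Type*} [CommSemiring R] [CommSemiring S] (h : R →+* S)
    (p : R⟦X⟧) : d⁄dX S (p.map h) = (d⁄dX R p).map h := by
  ext n
  simp [coeff_derivative, coeff_map]

theorem constantCoeff_subst_of_constantCoeff_eq_zero {R : Type*} [CommRing R]
    {b : R⟦X⟧} (hb : constantCoeff b = 0) (p : R⟦X⟧) :
    constantCoeff (p.subst b) = constantCoeff p := by
  rw [← coeff_zero_eq_constantCoeff_apply, coeff_subst' (HasSubst.of_constantCoeff_zero' hb),
    finsum_eq_single _ 0]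
  · simp
  · intro d hd
    simp [coeff_zero_eq_constantCoeff, hb, zero_pow hd]

theorem eq_of_map_evalRingHom_eq {R : Type*} [CommRing R] [IsDomain R] {s : Set R}
    (hs : s.Infinite) {P Q : R[X]⟦X⟧}
    (h : ∀ c ∈ s, P.map (Polynomial.evalRingHom c) = Q.map (Polynomial.evalRingHom c)) :
    P = Q := by
  refine PowerSeries.ext fun n => ?_
  refine Polynomial.eq_of_infinite_eval_eq _ _ (hs.mono fun c hc => ?_)
  simpa [coeff_map] using congrArg (coeff n) (h c hc)

theorem map_evalRingHom_map_C {R : Type*} [CommRing R] (c : R) (p : R⟦X⟧) :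
    (p.map Polynomial.C).map (Polynomial.evalRingHom c) = p := by
  ext n
  simp [coeff_map]

theorem linearMap_eq_zero_of_X_pow {R M : Type*} [CommSemiring R] [AddCommMonoid M] [Module R M]
    {χ : R⟦X⟧ →ₗ[R] M} (N : ℕ) (hmul : ∀ p, χ (X ^ N * p) = 0)
    (hpow : ∀ j < N, χ (X ^ j) = 0) : χ = 0 := by
  have hX_pow : ∀ j, χ (X ^ j) = 0 := by
    intro j
    rcases lt_or_ge j N with hj | hj
    · exact hpow j hj
    · rw [← Nat.add_sub_cancel' hj, pow_add]
      exact hmul _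
  have hpoly : ∀ q : R[X], χ q = 0 := by
    intro q
    induction q using Polynomial.induction_on' with
    | add p q hp hq => rw [Polynomial.coe_add, map_add, hp, hq, add_zero]
    | monomial n r =>
      rw [Polynomial.coe_monomial, monomial_eq_C_mul_X_pow, ← smul_eq_C_mul, map_smul, hX_pow,
        smul_zero]
  ext p
  rw [eq_X_pow_mul_shift_add_trunc N p, map_add, hmul, hpoly, add_zero, LinearMap.zero_apply]

theorem X_pow_dvd_derivative_X_pow_succ_mul {R : Type*} [CommSemiring R] (n : ℕ) (p : R⟦X⟧) :
    X ^ n ∣ d⁄dX R (X ^ (n + 1) * p) := by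
  rw [Derivation.leibniz, Derivation.leibniz_pow, derivative_X, Nat.add_sub_cancel]
  refine ⟨X * d⁄dX R p + ((n : R⟦X⟧) + 1) * p, ?_⟩
  simp only [smul_eq_mul, nsmul_eq_mul]
  push_cast
  ring

variable {K : Type*} [Field K]

theorem derivative_X_mul_inv_pow_mul_pow {φ : K⟦X⟧} (hφ : constantCoeff φ ≠ 0) (i n : ℕ) :
    d⁄dX K ((X * φ⁻¹) ^ (i + 1)) * φ ^ (i + 1 + n) =
      C ((i : K) + 1) * (X ^ i * ((1 - X * (φ⁻¹ * d⁄dX K φ)) * φ ^ n)) := by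
  have hinv : (φ⁻¹ * φ) ^ (i + 1) = 1 := by rw [PowerSeries.inv_mul_cancel φ hφ, one_pow]
  rw [derivative_pow, Derivation.leibniz, derivative_inv', derivative_X, Nat.add_sub_cancel]
  simp only [smul_eq_mul, map_add, map_natCast, map_one]
  push_cast
  linear_combination ((i : K⟦X⟧) + 1) * X ^ i * ((1 - X * (φ⁻¹ * d⁄dX K φ)) * φ ^ n) * hinv

variable [CharZero K]

theorem coeff_one_sub_X_mul_inv_mul_derivative_mul_pow {φ : K⟦X⟧} (hφ : constantCoeff φ ≠ 0)
    (n : ℕ) : coeff n ((1 - X * (φ⁻¹ * d⁄dX K φ)) * φ ^ n) = if n = 0 then 1 else 0 := by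
  cases n with
  | zero => simp
  | succ n =>
    have hφn : φ⁻¹ * d⁄dX K φ * φ ^ (n + 1) = φ ^ n * d⁄dX K φ := by
      rw [pow_succ]
      linear_combination (d⁄dX K φ * φ ^ n) * PowerSeries.inv_mul_cancel φ hφ
    have hcoeff : coeff (n + 1) (φ ^ (n + 1)) * ((n : K) + 1) =
        ((n : K) + 1) * coeff n (φ ^ n * d⁄dX K φ) := by
      rw [← coeff_derivative, derivative_pow, Nat.add_sub_cancel, mul_assoc, ← map_natCast C,
        coeff_C_mul]
      push_cast
      rfl
    rw [sub_mul, one_mul, map_sub, mul_assoc, coeff_succ_X_mul, hφn, if_neg n.succ_ne_zero,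
      sub_eq_zero]
    exact mul_right_cancel₀ (Nat.cast_add_one_ne_zero n) (hcoeff.trans (mul_comm _ _))

/-- The Lagrange–Bürmann formula: the coefficients of `H` are read off from `H ∘ (X / φ)`. -/
theorem coeff_derivative_subst_mul_pow {φ : K⟦X⟧} (hφ : constantCoeff φ ≠ 0) (H : K⟦X⟧)
    (m : ℕ) :
    coeff m (d⁄dX K (H.subst (X * φ⁻¹)) * φ ^ (m + 1)) = (m + 1) * coeff (m + 1) H := by
  have hu : HasSubst (X * φ⁻¹) := HasSubst.of_constantCoeff_zero' (by simp)
  let χ : K⟦X⟧ →ₗ[K] K :=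
    (coeff m).comp ((LinearMap.mulRight K (φ ^ (m + 1))).comp
      ((d⁄dX K).toLinearMap.comp (substAlgHom hu).toLinearMap)) - ((m : K) + 1) • coeff (m + 1)
  have hχ : ∀ H, χ H =
      coeff m (d⁄dX K (H.subst (X * φ⁻¹)) * φ ^ (m + 1)) - (m + 1) * coeff (m + 1) H := by
    intro H
    simp [χ, coe_substAlgHom]
  -- `χ` only sees the coefficients of `H` up to `m + 1`, so it suffices to test monomials.
  suffices χ = 0 by simpa [hχ, sub_eq_zero] using LinearMap.congr_fun this H
  refine linearMap_eq_zero_of_X_pow (m + 2) (fun p => ?_) (fun j hj => ?_)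
  · rw [hχ, subst_mul hu, subst_pow hu, subst_X hu, mul_pow, mul_assoc, coeff_X_pow_mul',
      if_neg (by omega), mul_zero, sub_zero]
    obtain ⟨q, hq⟩ :=
      X_pow_dvd_derivative_X_pow_succ_mul (m + 1) (φ⁻¹ ^ (m + 2) * subst (X * φ⁻¹) p)
    rw [hq, mul_assoc, coeff_X_pow_mul', if_neg (by omega)]
  · rw [hχ, subst_pow hu, subst_X hu]
    rcases j with _ | i
    · simp
    obtain ⟨n, rfl⟩ := Nat.exists_eq_add_of_le (show i ≤ m by omega)
    rw [show i + n + 1 = i + 1 + n by ring, derivative_X_mul_inv_pow_mul_pow hφ, coeff_C_mul,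
      add_comm i n, coeff_X_pow_mul, coeff_one_sub_X_mul_inv_mul_derivative_mul_pow hφ,
      coeff_X_pow]
    by_cases hn : n = 0
    · subst hn
      simp
    · simp [hn]

end PowerSeries

variable {K : Type*} [Field K]

def IsBinomialType (f : ℕ → K[X]) : Prop :=
  f 0 = 1 ∧ ∀ n x y, (f n).eval (x + y) =
    ∑ j ∈ range (n + 1), (n.choose j : K) * (f j).eval x * (f (n - j)).eval y

/-- Coefficients in `K[X]`, so that identities between the specializations `egfAt f c` can be
extended from infinitely many `c` to all `c`. -/
noncomputable def egf (f : ℕ → K[X]) : K[X]⟦X⟧ := mk fun n => (n.factorial : K)⁻¹ • f n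

noncomputable def egfAt (f : ℕ → K[X]) (c : K) : K⟦X⟧ := (egf f).map (Polynomial.evalRingHom c)

/-- For `f` of binomial type, `egfAt f c = exp (c g)` where `g' = egfLogDeriv f`. -/
noncomputable def egfLogDeriv (f : ℕ → K[X]) : K⟦X⟧ := (egfAt f 1)⁻¹ * d⁄dX K (egfAt f 1)

variable {f : ℕ → K[X]}

theorem coeff_egf (n : ℕ) : coeff n (egf f) = (n.factorial : K)⁻¹ • f n := coeff_mk _ _

theorem coeff_egfAt (c : K) (n : ℕ) :
    coeff n (egfAt f c) = (n.factorial : K)⁻¹ * (f n).eval c := by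
  simp [egfAt, coeff_egf]

theorem IsBinomialType.constantCoeff_egfAt (hf : IsBinomialType f) (c : K) :
    constantCoeff (egfAt f c) = 1 := by
  rw [← coeff_zero_eq_constantCoeff_apply, coeff_egfAt, hf.1]
  simp

theorem IsBinomialType.constantCoeff_egfAt_ne_zero (hf : IsBinomialType f) (c : K) :
    constantCoeff (egfAt f c) ≠ 0 := by
  rw [hf.constantCoeff_egfAt]
  exact one_ne_zero

variable [CharZero K]

theorem coeff_egfAt_mul_egfAt (x y : K) (n : ℕ) :
    coeff n (egfAt f x * egfAt f y) = (n.factorial : K)⁻¹ *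
      ∑ j ∈ range (n + 1), (n.choose j : K) * (f j).eval x * (f (n - j)).eval y := by
  rw [coeff_mul, Nat.sum_antidiagonal_eq_sum_range_succ
    (fun i j => coeff i (egfAt f x) * coeff j (egfAt f y)), mul_sum]
  refine sum_congr rfl fun j hj => ?_
  have hjn : j ≤ n := Nat.lt_succ_iff.1 (mem_range.1 hj)
  have hn : (n.factorial : K) ≠ 0 := Nat.cast_ne_zero.2 n.factorial_ne_zero
  rw [coeff_egfAt, coeff_egfAt, Nat.cast_choose K hjn]
  field_simp

theorem isBinomialType_iff_egfAt_add :
    IsBinomialType f ↔ f 0 = 1 ∧ ∀ x y, egfAt f (x + y) = egfAt f x * egfAt f y := by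
  have hfac : ∀ n : ℕ, (n.factorial : K)⁻¹ ≠ 0 :=
    fun n => inv_ne_zero (Nat.cast_ne_zero.2 n.factorial_ne_zero)
  simp only [IsBinomialType, PowerSeries.ext_iff, coeff_egfAt, coeff_egfAt_mul_egfAt,
    mul_right_inj' (hfac _)]
  exact and_congr_right fun _ => ⟨fun h x y n => h n x y, fun h n x y => h x y n⟩

namespace IsBinomialType

theorem egfAt_add (hf : IsBinomialType f) (x y : K) :
    egfAt f (x + y) = egfAt f x * egfAt f y :=
  (isBinomialType_iff_egfAt_add.1 hf).2 x y

theorem egfAt_zero (hf : IsBinomialType f) : egfAt f 0 = 1 := by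
  have hinv := PowerSeries.mul_inv_cancel _ (hf.constantCoeff_egfAt_ne_zero 0)
  calc egfAt f 0 = egfAt f (0 + 0) * (egfAt f 0)⁻¹ := by
        rw [hf.egfAt_add, mul_assoc, hinv, mul_one]
    _ = 1 := by rw [add_zero, hinv]

theorem egfAt_natCast_mul (hf : IsBinomialType f) (n : ℕ) (c : K) :
    egfAt f (n * c) = egfAt f c ^ n := by
  induction n with
  | zero => simp [hf.egfAt_zero]
  | succ n ih => rw [Nat.cast_succ, add_mul, one_mul, hf.egfAt_add, ih, pow_succ]

theorem derivative_egfAt_natCast (hf : IsBinomialType f) (n : ℕ) :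
    d⁄dX K (egfAt f n) = C (n : K) * egfLogDeriv f * egfAt f n := by
  induction n with
  | zero => simp [hf.egfAt_zero]
  | succ n ih =>
    have hinv := PowerSeries.inv_mul_cancel _ (hf.constantCoeff_egfAt_ne_zero 1)
    rw [Nat.cast_succ, hf.egfAt_add, Derivation.leibniz, ih, smul_eq_mul, smul_eq_mul,
      egfLogDeriv, map_add, map_one]
    linear_combination (-(egfAt f n * d⁄dX K (egfAt f 1))) * hinv

theorem derivative_egfAt (hf : IsBinomialType f) (c : K) :
    d⁄dX K (egfAt f c) = C c * egfLogDeriv f * egfAt f c := by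
  have hmap : ∀ c : K, (C Polynomial.X * (egfLogDeriv f).map Polynomial.C * egf f).map
      (Polynomial.evalRingHom c) = C c * egfLogDeriv f * egfAt f c := by
    intro c
    rw [map_mul, map_mul, map_C, map_evalRingHom_map_C, Polynomial.coe_evalRingHom,
      Polynomial.eval_X, egfAt]
  have hpoly :
      d⁄dX K[X] (egf f) = C Polynomial.X * (egfLogDeriv f).map Polynomial.C * egf f := by
    refine eq_of_map_evalRingHom_eq (Set.infinite_range_of_injective Nat.cast_injective) ?_
    rintro _ ⟨n, rfl⟩
    rw [← derivative_map, hmap, ← egfAt, hf.derivative_egfAt_natCast]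
  rw [egfAt, derivative_map, hpoly]
  exact hmap c

theorem mul_coeff_egfAt_subst (hf : IsBinomialType f) {a : K} {v : K⟦X⟧}
    (hv : constantCoeff v = 0) (hvu : v.subst (X * (egfAt f a)⁻¹) = X) (c : K) (n : ℕ) :
    (a * n + c) * coeff n ((egfAt f c).subst v) = c * coeff n (egfAt f (a * n + c)) := by
  rcases n with _ | m
  · simp [coeff_zero_eq_constantCoeff_apply, constantCoeff_subst_of_constantCoeff_eq_zero hv]
  have hu : HasSubst (X * (egfAt f a)⁻¹ : K⟦X⟧) := HasSubst.of_constantCoeff_zero' (by simp)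
  have hG : PowerSeries.subst (X * (egfAt f a)⁻¹) ((egfAt f c).subst v) = egfAt f c := by
    rw [subst_comp_subst_apply (HasSubst.of_constantCoeff_zero' hv) hu, hvu, X_subst]
  have hL :=
    coeff_derivative_subst_mul_pow (hf.constantCoeff_egfAt_ne_zero a) ((egfAt f c).subst v) m
  set e : K := a * ↑(m + 1) + c
  have hprod : d⁄dX K (egfAt f c) * egfAt f a ^ (m + 1) = C c * (egfLogDeriv f * egfAt f e) := by
    rw [← hf.egfAt_natCast_mul, hf.derivative_egfAt, mul_assoc, mul_assoc, ← hf.egfAt_add,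
      mul_comm ((m + 1 : ℕ) : K) a, add_comm c]
  have hderiv := coeff_derivative (egfAt f e) m
  rw [hf.derivative_egfAt, mul_assoc, coeff_C_mul] at hderiv
  rw [hG, hprod, coeff_C_mul] at hL
  apply mul_left_cancel₀ (Nat.cast_add_one_ne_zero m)
  linear_combination c * hderiv - e * hL

theorem egfAt_eq_subst (hf : IsBinomialType f) {a : K} {F : ℕ → K[X]}
    (hF : ∀ (n : ℕ) (x : K), (a * n + x) * (F n).eval x = x * (f n).eval (a * n + x))
    {v : K⟦X⟧} (hv : constantCoeff v = 0) (hvu : v.subst (X * (egfAt f a)⁻¹) = X) (c : K) :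
    egfAt F c = (egfAt f c).subst v := by
  have hvC : HasSubst (v.map Polynomial.C) := HasSubst.of_constantCoeff_zero' (by
    rw [← coeff_zero_eq_constantCoeff_apply, coeff_map, coeff_zero_eq_constantCoeff_apply, hv,
      map_zero])
  have hmap : ∀ c : K, PowerSeries.map (Polynomial.evalRingHom c)
      ((egf f).subst (v.map Polynomial.C)) = (egfAt f c).subst v := by
    intro c
    refine (map_subst hvC (egf f)).trans ?_
    congr 1
    exact map_evalRingHom_map_C c v
  suffices egf F = (egf f).subst (v.map Polynomial.C) by rw [egfAt, this, hmap]
  refine PowerSeries.ext fun n => Polynomial.eq_of_infinite_eval_eq _ _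
    ((Set.finite_singleton (-(a * n))).infinite_compl.mono fun c hc => ?_)
  have hc : a * n + c ≠ 0 := fun h => hc (by rw [Set.mem_singleton_iff]; linear_combination h)
  have key := hf.mul_coeff_egfAt_subst hv hvu c n
  rw [← hmap c, coeff_map, Polynomial.coe_evalRingHom, coeff_egfAt] at key
  show Polynomial.eval c _ = Polynomial.eval c _
  rw [coeff_egf, Polynomial.eval_smul, smul_eq_mul]
  apply mul_left_cancel₀ hc
  linear_combination (n.factorial : K)⁻¹ * hF n c - key

theorem abel (hf : IsBinomialType f) (a : K) {F : ℕ → K[X]} (hF0 : F 0 = 1)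
    (hF : ∀ (n : ℕ) (x : K), (a * n + x) * (F n).eval x = x * (f n).eval (a * n + x)) :
    IsBinomialType F := by
  set u : K⟦X⟧ := X * (egfAt f a)⁻¹
  have hu0 : constantCoeff u = 0 := by simp [u]
  have hu1 : IsUnit (coeff 1 u) := by simp [u, hf.constantCoeff_egfAt]
  have hv := constantCoeff_substInvOfIsUnit u hu1
  have hG := hf.egfAt_eq_subst hF hv (subst_substInvOfIsUnit_left u hu0 hu1)
  refine isBinomialType_iff_egfAt_add.2 ⟨hF0, fun x y => ?_⟩
  rw [hG, hG, hG, hf.egfAt_add, subst_mul (HasSubst.of_constantCoeff_zero' hv)]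

end IsBinomialType

theorem stmt_7_general (f : ℕ → Polynomial ℝ) (hf0 : f 0 = 1)
    (hbin : ∀ n : ℕ, ∀ x y : ℝ, (f n).eval (x + y) =
      ∑ j ∈ Finset.range (n + 1), (n.choose j : ℝ) * (f j).eval x * (f (n - j)).eval y)
    (a : ℝ) (F : ℕ → Polynomial ℝ) (hF0 : F 0 = 1)
    (hF : ∀ n : ℕ, 1 ≤ n → ∀ x : ℝ, (a * n + x) * (F n).eval x = x * (f n).eval (a * n + x)) :
    F 0 = 1 ∧ ∀ n : ℕ, ∀ x y : ℝ, (F n).eval (x + y) =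
      ∑ j ∈ Finset.range (n + 1), (n.choose j : ℝ) * (F j).eval x * (F (n - j)).eval y := by
  refine IsBinomialType.abel ⟨hf0, hbin⟩ a hF0 fun n x => ?_
  rcases n with _ | n
  · simp [hF0, hf0]
  · exact hF (n + 1) n.succ_pos x

theorem stmt_7 (f : ℕ → Polynomial ℝ) (hf0 : f 0 = 1) (hdeg : ∀ n, (f n).natDegree = n)
    (hbin : ∀ n : ℕ, ∀ x y : ℝ, (f n).eval (x + y) =
      ∑ j ∈ Finset.range (n + 1), (n.choose j : ℝ) * (f j).eval x * (f (n - j)).eval y)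
    (a : ℝ) (F : ℕ → Polynomial ℝ) (hF0 : F 0 = 1)
    (hF : ∀ n : ℕ, 1 ≤ n → ∀ x : ℝ, (a * n + x) * (F n).eval x = x * (f n).eval (a * n + x)) :
    F 0 = 1 ∧ ∀ n : ℕ, ∀ x y : ℝ, (F n).eval (x + y) =
      ∑ j ∈ Finset.range (n + 1), (n.choose j : ℝ) * (F j).eval x * (F (n - j)).eval y :=
  stmt_7_general f hf0 hbin a F hF0 hF
end

section
/- Let (x_m)_{m≥1} be a real sequence with x₁ = 1, write B(n,k) := B_{n,k}(x₁, x₂, ...), and let r ≥ 1, s ≥ 0 be integers. Then A_n( sB(r+1, r)/(r(r+1)), ..., (s/(mr)) · B((r+1)m, mr) / C((r+1)m, mr), ... ) = (s/(nr+s)) · B((r+1)n + s, nr + s) / C((r+1)n + s, nr + s), where A_n is the complete Bell polynomial and the m-th argument is (s/(mr)) · B((r+1)m, mr) / C((r+1)m, mr). -/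
open Finset

/-!
Write `∑ x_m t^m/m! = t F(t)`, so that `F(0) = x₁ = 1` and
`B(N, K) / C(N, K) = (N-K)! [t^(N-K)] F^K`. Let `w` be the power series with `w = t F(w)^r`.
Lagrange inversion, `n [t^n] H(w) = [u^(n-1)] H'(u) F(u)^(rn)`, gives
`[t^n] log F(w) = [u^n] F^(rn) / (rn)` and `[t^n] F(w)^s = s/(rn+s) [u^n] F^(rn+s)`. Hence the
arguments of `A_n` are the exponential coefficients of `s log F(w)`, and `A_n` of them is
`n! [t^n] exp(s log F(w)) = n! [t^n] F(w)^s`.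

Lagrange inversion for `w = t φ(w)` is proved from the explicit coefficients
`c(n, m) = (m/n) [u^(n-m)] φ^n` of `w^m`: they are multiplicative in `m`,
`∑ c(i, p) c(n-i, q) = c(n, p+q)`, by strong induction on `n` using the identity
`(k+l) (φ^k)' φ^l = k (φ^(k+l))'`.
-/

namespace PowerSeries

section CommRing

variable {R : Type*} [CommRing R]

theorem coeff_pow_eq_zero_of_lt {a : R⟦X⟧} (ha : constantCoeff a = 0) {n m : ℕ} (h : n < m) :
    coeff n (a ^ m) = 0 := by
  obtain ⟨b, rfl⟩ := X_dvd_iff.2 ha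
  rw [mul_pow, coeff_X_pow_mul', if_neg (by omega)]

theorem coeff_subst_eq_sum_range {a : R⟦X⟧} (ha : constantCoeff a = 0) (f : R⟦X⟧) (n : ℕ) :
    coeff n (f.subst a) = ∑ d ∈ range (n + 1), coeff d f * coeff n (a ^ d) := by
  rw [coeff_subst' (HasSubst.of_constantCoeff_zero' ha),
    finsum_eq_sum_of_support_subset (s := range (n + 1))]
  · simp only [smul_eq_mul]
  · intro d hd
    rw [Function.mem_support] at hd
    rw [coe_range, Set.mem_Iio, Nat.lt_succ_iff]
    by_contra! h
    exact hd (by rw [coeff_pow_eq_zero_of_lt ha h, smul_zero])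

theorem constantCoeff_subst_of_constantCoeff_eq_zero_s12 {a : R⟦X⟧} (ha : constantCoeff a = 0)
    (f : R⟦X⟧) : constantCoeff (f.subst a) = constantCoeff f := by
  rw [← coeff_zero_eq_constantCoeff_apply, coeff_subst_eq_sum_range ha, sum_range_one,
    pow_zero, coeff_one, if_pos rfl, mul_one, coeff_zero_eq_constantCoeff_apply]

theorem coeff_X_mul_derivative (f : R⟦X⟧) (n : ℕ) :
    coeff n (X * d⁄dX R f) = n * coeff n f := by
  rcases n with _ | n
  · simp
  · rw [coeff_succ_X_mul, coeff_derivative, mul_comm]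
    push_cast
    ring

theorem natCast_add_mul_derivative_pow_mul_pow (φ : R⟦X⟧) (k l : ℕ) :
    ((k + l : ℕ) : R⟦X⟧) * (d⁄dX R (φ ^ k) * φ ^ l) = k * d⁄dX R (φ ^ (k + l)) := by
  rcases k with _ | k
  · simp
  · rw [derivative_pow, derivative_pow, show k + 1 + l - 1 = k + l by omega,
      Nat.add_sub_cancel, pow_add φ k l]
    ring

theorem natCast_add_mul_sum_antidiagonal_mul_coeff_pow (φ : R⟦X⟧) (k l n : ℕ) :
    ((k + l : ℕ) : R) *
        ∑ ij ∈ antidiagonal n, (ij.1 : R) * coeff ij.1 (φ ^ k) * coeff ij.2 (φ ^ l) =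
      k * n * coeff n (φ ^ (k + l)) := by
  calc ((k + l : ℕ) : R) *
        ∑ ij ∈ antidiagonal n, (ij.1 : R) * coeff ij.1 (φ ^ k) * coeff ij.2 (φ ^ l)
      = coeff n (C ((k + l : ℕ) : R) * (X * d⁄dX R (φ ^ k) * φ ^ l)) := by
        rw [coeff_C_mul, coeff_mul]
        simp_rw [coeff_X_mul_derivative]
    _ = coeff n (C (k : R) * (X * d⁄dX R (φ ^ (k + l)))) := by
        rw [map_natCast, map_natCast, mul_assoc X, mul_left_comm, mul_left_comm _ X,
          natCast_add_mul_derivative_pow_mul_pow]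
    _ = k * n * coeff n (φ ^ (k + l)) := by
        rw [coeff_C_mul, coeff_X_mul_derivative, mul_assoc]

theorem natCast_mul_derivative_mul_pow {ℓ φ : R⟦X⟧} (h : d⁄dX R ℓ * φ = d⁄dX R φ) (k : ℕ) :
    (k : R⟦X⟧) * (d⁄dX R ℓ * φ ^ k) = d⁄dX R (φ ^ k) := by
  rcases k with _ | k
  · simp
  · rw [derivative_pow, Nat.add_sub_cancel, ← h]
    ring

theorem eq_of_derivative_eq_mul [IsAddTorsionFree R] (q : R⟦X⟧) {y z : R⟦X⟧}
    (hy : d⁄dX R y = q * y) (hz : d⁄dX R z = q * z) (h0 : constantCoeff y = constantCoeff z) :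
    y = z := by
  ext n
  induction n using Nat.strong_induction_on with
  | _ n ih =>
    rcases n with _ | k
    · simpa using h0
    · have hyz : coeff k (d⁄dX R y) = coeff k (d⁄dX R z) := by
        rw [hy, hz, coeff_mul, coeff_mul]
        refine sum_congr rfl fun ij hij => ?_
        rw [ih ij.2 (by rw [HasAntidiagonal.mem_antidiagonal] at hij; omega)]
      rw [coeff_derivative, coeff_derivative, ← Nat.cast_succ, mul_comm, ← nsmul_eq_mul,
        mul_comm, ← nsmul_eq_mul] at hyz
      exact nsmul_right_injective k.succ_ne_zero hyz

end CommRing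

section Log

variable {A : Type*} [CommRing A] [Algebra ℚ A]

theorem derivative_log_mul_one_add_X : d⁄dX A (log A) * (1 + X) = 1 := by
  ext n
  rw [mul_add, mul_one, map_add, deriv_log]
  rcases n with _ | n
  · simp
  · rw [coeff_succ_mul_X, coeff_mk, coeff_mk, coeff_one, if_neg n.succ_ne_zero]
    simp [pow_succ]

theorem derivative_logOf_mul {f : A⟦X⟧} (hf : constantCoeff f = 1) :
    d⁄dX A (logOf f) * f = d⁄dX A f := by
  have hsub : HasSubst (f - 1) := HasSubst.of_constantCoeff_zero' (by simp [hf])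
  have hf' : (1 + X : A⟦X⟧).subst (f - 1) = f := by
    rw [← coe_substAlgHom hsub, map_add, map_one, coe_substAlgHom, subst_X hsub]
    ring
  calc d⁄dX A (logOf f) * f
      = ((d⁄dX A (log A)).subst (f - 1) * (1 + X : A⟦X⟧).subst (f - 1)) * d⁄dX A f := by
        rw [logOf_eq, derivative_subst hsub, hf', map_sub, derivative_one, sub_zero]
        ring
    _ = d⁄dX A f := by
        rw [← subst_mul hsub, derivative_log_mul_one_add_X, ← coe_substAlgHom hsub, map_one,
          one_mul]

theorem exp_subst_smul_logOf [IsAddTorsionFree A] {f : A⟦X⟧} (hf : constantCoeff f = 1)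
    (s : ℕ) : (exp A).subst ((s : A) • logOf f) = f ^ s := by
  have hℓ : constantCoeff ((s : A) • logOf f) = 0 := by simp [constantCoeff_logOf hf]
  apply eq_of_derivative_eq_mul ((s : A) • d⁄dX A (logOf f))
  · rw [derivative_subst (HasSubst.of_constantCoeff_zero' hℓ), derivative_exp,
      Derivation.map_smul, mul_comm]
  · rw [← natCast_mul_derivative_mul_pow (derivative_logOf_mul hf), Nat.cast_smul_eq_nsmul,
      nsmul_eq_mul, mul_assoc]
  · rw [constantCoeff_subst_of_constantCoeff_eq_zero_s12 hℓ, constantCoeff_exp, map_pow, hf, one_pow]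

end Log

section Lagrange

variable {K : Type*} [Field K] (φ : K⟦X⟧)

/-- Lagrange's formula `[X^n] w^m = (m/n) [X^(n-m)] φ^n` (`n ≠ 0`) for the powers of the solution
`w` of `w = X * φ(w)`; the case `n = 0` is set separately because `0 / 0 = 0`. -/
noncomputable def lagrangeCoeff (n m : ℕ) : K :=
  if m ≤ n then if n = 0 then 1 else m / n * coeff (n - m) (φ ^ n) else 0

theorem lagrangeCoeff_of_lt {n m : ℕ} (h : n < m) : lagrangeCoeff φ n m = 0 :=
  if_neg (by omega)

theorem lagrangeCoeff_of_le {n m : ℕ} (hn : n ≠ 0) (h : m ≤ n) :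
    lagrangeCoeff φ n m = m / n * coeff (n - m) (φ ^ n) := by
  rw [lagrangeCoeff, if_pos h, if_neg hn]

theorem lagrangeCoeff_zero_right (n : ℕ) : lagrangeCoeff φ n 0 = if n = 0 then 1 else 0 := by
  by_cases hn : n = 0 <;> simp [lagrangeCoeff, hn]

noncomputable def lagrangeSeries : K⟦X⟧ :=
  mk fun n => lagrangeCoeff φ n 1

theorem constantCoeff_lagrangeSeries : constantCoeff (lagrangeSeries φ) = 0 := by
  rw [← coeff_zero_eq_constantCoeff_apply, lagrangeSeries, coeff_mk, lagrangeCoeff_of_lt φ one_pos]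

variable [CharZero K]

/-- The coefficientwise form of `w^q * φ(w)^m = w^(m+q) / X^m`. -/
theorem sum_range_coeff_pow_mul_lagrangeCoeff {m : ℕ} (hm : m ≠ 0) (N q : ℕ) :
    ∑ j ∈ range (N + 1), coeff j (φ ^ m) * lagrangeCoeff φ N (j + q) =
      lagrangeCoeff φ (N + m) (m + q) := by
  rcases lt_or_ge N q with hNq | hqN
  · rw [lagrangeCoeff_of_lt φ (by omega)]
    exact sum_eq_zero fun j _ => by rw [lagrangeCoeff_of_lt φ (by omega), mul_zero]
  obtain ⟨P, rfl⟩ := Nat.exists_eq_add_of_le hqN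
  rcases eq_or_ne (q + P) 0 with hN | hN
  · obtain ⟨rfl, rfl⟩ : q = 0 ∧ P = 0 := by omega
    simp [lagrangeCoeff, hm]
  have hsum : ∑ j ∈ range (q + P + 1), coeff j (φ ^ m) * lagrangeCoeff φ (q + P) (j + q) =
      (∑ ij ∈ antidiagonal P, (ij.1 : K) * coeff ij.1 (φ ^ m) * coeff ij.2 (φ ^ (q + P)) +
        q * coeff P (φ ^ (m + (q + P)))) / (q + P : ℕ) := by
    rw [pow_add φ m, coeff_mul, mul_sum, ← sum_add_distrib, sum_div,
      Nat.sum_antidiagonal_eq_sum_range_succ_mk,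
      ← sum_subset (range_subset_range.2 (by omega : P + 1 ≤ q + P + 1))]
    · refine sum_congr rfl fun j hj => ?_
      rw [mem_range] at hj
      rw [lagrangeCoeff_of_le φ hN (by omega), show q + P - (j + q) = P - j by omega]
      push_cast
      ring
    · intro j _ hj
      rw [mem_range] at hj
      rw [lagrangeCoeff_of_lt φ (by omega), mul_zero]
  have hderiv := natCast_add_mul_sum_antidiagonal_mul_coeff_pow φ m (q + P) P
  rw [hsum, lagrangeCoeff_of_le φ (by omega) (by omega), show q + P + m - (m + q) = P by omega,
    show q + P + m = m + (q + P) by omega]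
  have hqP : ((q + P : ℕ) : K) ≠ 0 := Nat.cast_ne_zero.2 hN
  have hmqP : ((m + (q + P) : ℕ) : K) ≠ 0 := Nat.cast_ne_zero.2 (by omega)
  field_simp
  push_cast at hderiv ⊢
  linear_combination hderiv

theorem lagrangeCoeff_add_self_eq_sum {p : ℕ} (hp : p ≠ 0) {i P : ℕ} (hi : i ≤ P) :
    lagrangeCoeff φ (p + i) p = ∑ k ∈ range (P + 1), coeff k (φ ^ p) * lagrangeCoeff φ i k := by
  have h := sum_range_coeff_pow_mul_lagrangeCoeff φ hp i 0
  simp only [add_zero] at h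
  rw [add_comm p i, ← h]
  refine sum_subset (range_subset_range.2 (by omega)) fun k _ hk => ?_
  rw [mem_range] at hk
  rw [lagrangeCoeff_of_lt φ (by omega), mul_zero]

theorem sum_range_lagrangeCoeff_mul_lagrangeCoeff (n p q : ℕ) :
    ∑ i ∈ range (n + 1), lagrangeCoeff φ i p * lagrangeCoeff φ (n - i) q =
      lagrangeCoeff φ n (p + q) := by
  induction n using Nat.strong_induction_on generalizing p q with
  | _ n ih =>
  rcases eq_or_ne p 0 with rfl | hp
  · rw [sum_range_succ', sum_eq_zero fun i _ => by
      rw [lagrangeCoeff_zero_right, if_neg i.succ_ne_zero, zero_mul]]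
    rw [lagrangeCoeff_zero_right, if_pos rfl, one_mul, zero_add, zero_add, Nat.sub_zero]
  rcases lt_or_ge n p with hnp | hpn
  · rw [lagrangeCoeff_of_lt φ (by omega)]
    refine sum_eq_zero fun i hi => ?_
    rw [mem_range] at hi
    rw [lagrangeCoeff_of_lt φ (by omega), zero_mul]
  obtain ⟨P, rfl⟩ := Nat.exists_eq_add_of_le hpn
  calc ∑ i ∈ range (p + P + 1), lagrangeCoeff φ i p * lagrangeCoeff φ (p + P - i) q
      = ∑ i ∈ range (P + 1), lagrangeCoeff φ (p + i) p * lagrangeCoeff φ (P - i) q := by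
        rw [add_assoc, sum_range_add, sum_eq_zero fun i hi => by
          rw [mem_range] at hi; rw [lagrangeCoeff_of_lt φ hi, zero_mul], zero_add]
        simp_rw [Nat.add_sub_add_left]
    _ = ∑ k ∈ range (P + 1), coeff k (φ ^ p) *
          ∑ i ∈ range (P + 1), lagrangeCoeff φ i k * lagrangeCoeff φ (P - i) q := by
        rw [sum_congr rfl fun i hi => by
          rw [lagrangeCoeff_add_self_eq_sum φ hp (Nat.lt_succ_iff.1 (mem_range.1 hi)), sum_mul],
          sum_comm]
        simp_rw [mul_sum, mul_assoc]
    _ = ∑ k ∈ range (P + 1), coeff k (φ ^ p) * lagrangeCoeff φ P (k + q) := by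
        simp_rw [ih P (by omega)]
    _ = lagrangeCoeff φ (p + P) (p + q) := by
        rw [sum_range_coeff_pow_mul_lagrangeCoeff φ hp, add_comm P p]

theorem coeff_lagrangeSeries_pow (m n : ℕ) :
    coeff n (lagrangeSeries φ ^ m) = lagrangeCoeff φ n m := by
  induction m generalizing n with
  | zero => rw [pow_zero, coeff_one, lagrangeCoeff_zero_right]
  | succ m ih =>
    rw [pow_succ, coeff_mul, Nat.sum_antidiagonal_eq_sum_range_succ_mk]
    simp_rw [ih, lagrangeSeries, coeff_mk]
    exact sum_range_lagrangeCoeff_mul_lagrangeCoeff φ n m 1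

theorem coeff_subst_lagrangeSeries (H : K⟦X⟧) (n : ℕ) :
    (n + 1 : K) * coeff (n + 1) (H.subst (lagrangeSeries φ)) =
      coeff n (d⁄dX K H * φ ^ (n + 1)) := by
  rw [coeff_subst_eq_sum_range (constantCoeff_lagrangeSeries φ), sum_range_succ', coeff_mul,
    Nat.sum_antidiagonal_eq_sum_range_succ_mk]
  simp_rw [coeff_lagrangeSeries_pow, lagrangeCoeff_zero_right, if_neg n.succ_ne_zero, mul_zero,
    add_zero, mul_sum]
  refine sum_congr rfl fun i hi => ?_
  rw [mem_range] at hi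
  rw [lagrangeCoeff_of_le φ n.succ_ne_zero (by omega), coeff_derivative,
    show n + 1 - (i + 1) = n - i by omega]
  field_simp
  push_cast
  ring

theorem natCast_add_mul_coeff_pow_subst_lagrangeSeries (F : K⟦X⟧) (r s : ℕ) {n : ℕ}
    (hn : n ≠ 0) :
    ((s + r * n : ℕ) : K) * coeff n ((F ^ s).subst (lagrangeSeries (F ^ r))) =
      s * coeff n (F ^ (s + r * n)) := by
  obtain ⟨n, rfl⟩ := Nat.exists_eq_add_one_of_ne_zero hn
  have h := congrArg (coeff n) (natCast_add_mul_derivative_pow_mul_pow F s (r * (n + 1)))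
  rw [← map_natCast C, ← map_natCast C s, coeff_C_mul, coeff_C_mul, coeff_derivative, pow_mul,
    ← coeff_subst_lagrangeSeries] at h
  refine mul_left_cancel₀ (Nat.cast_add_one_ne_zero n) ?_
  push_cast at h ⊢
  linear_combination h

theorem natCast_mul_coeff_logOf_subst_lagrangeSeries {F : K⟦X⟧} (hF : constantCoeff F = 1)
    (r : ℕ) {n : ℕ} (hn : n ≠ 0) :
    ((r * n : ℕ) : K) * coeff n ((logOf F).subst (lagrangeSeries (F ^ r))) =
      coeff n (F ^ (r * n)) := by
  obtain ⟨n, rfl⟩ := Nat.exists_eq_add_one_of_ne_zero hn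
  have h := congrArg (coeff n)
    (natCast_mul_derivative_mul_pow (derivative_logOf_mul hF) (r * (n + 1)))
  rw [← map_natCast C, coeff_C_mul, coeff_derivative, pow_mul, ← coeff_subst_lagrangeSeries,
    ← pow_mul] at h
  refine mul_left_cancel₀ (Nat.cast_add_one_ne_zero n) ?_
  push_cast at h ⊢
  linear_combination h

end Lagrange

end PowerSeries

open PowerSeries

noncomputable def bellSeries (x : ℕ → ℝ) : ℝ⟦X⟧ :=
  mk fun m => if m = 0 then 0 else x m / (m.factorial : ℝ)

noncomputable def bellSeriesDivX (x : ℕ → ℝ) : ℝ⟦X⟧ :=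
  mk fun m => x (m + 1) / ((m + 1).factorial : ℝ)

theorem constantCoeff_bellSeries (x : ℕ → ℝ) : constantCoeff (bellSeries x) = 0 := by
  simp [bellSeries, ← coeff_zero_eq_constantCoeff_apply]

theorem constantCoeff_bellSeriesDivX (x : ℕ → ℝ) : constantCoeff (bellSeriesDivX x) = x 1 := by
  simp [bellSeriesDivX, ← coeff_zero_eq_constantCoeff_apply]

theorem bellSeries_eq_X_mul (x : ℕ → ℝ) : bellSeries x = X * bellSeriesDivX x := by
  ext m
  rcases m with _ | m
  · simp [bellSeries]
  · rw [coeff_succ_X_mul, bellSeries, bellSeriesDivX, coeff_mk, coeff_mk, if_neg m.succ_ne_zero]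

theorem bellA_eq_factorial_mul_coeff_exp_subst (y : ℕ → ℝ) {n : ℕ} (hn : n ≠ 0) :
    bellA n y = n.factorial * coeff n ((exp ℝ).subst (bellSeries y)) := by
  rw [bellA, if_neg hn, coeff_subst_eq_sum_range (constantCoeff_bellSeries y), range_eq_Ico,
    sum_eq_sum_Ico_succ_bot n.succ_pos, zero_add, Nat.succ_eq_add_one, Ico_add_one_right_eq_Icc,
    pow_zero, coeff_one, if_neg hn, mul_zero, zero_add, mul_sum]
  refine sum_congr rfl fun k _ => ?_
  rw [bellB, ← bellSeries, coeff_exp, map_div₀, map_one, map_natCast]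
  ring

theorem bellB_add_div_choose (x : ℕ → ℝ) (k m : ℕ) :
    bellB (k + m) k x / ((k + m).choose k : ℝ) =
      m.factorial * coeff m (bellSeriesDivX x ^ k) := by
  have hchoose : ((k + m).choose k : ℝ) * k.factorial * m.factorial = (k + m).factorial := by
    rw [Nat.choose_symm_add]
    exact_mod_cast Nat.add_choose_mul_factorial_mul_factorial k m
  have hk : (k.factorial : ℝ) ≠ 0 := by positivity
  have hc : ((k + m).choose k : ℝ) ≠ 0 := Nat.cast_ne_zero.2 (Nat.choose_pos (by omega)).ne'
  rw [bellB, ← bellSeries, bellSeries_eq_X_mul, mul_pow, coeff_X_pow_mul', if_pos (by omega),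
    Nat.add_sub_cancel_left, ← hchoose]
  field_simp

theorem bellSeries_div_choose_eq_smul_logOf_subst (x : ℕ → ℝ) (hx1 : x 1 = 1) (s : ℕ)
    {r : ℕ} (hr : r ≠ 0) :
    bellSeries (fun m => (s : ℝ) / ((m * r : ℕ) : ℝ) *
        bellB ((r + 1) * m) (m * r) x / ((((r + 1) * m).choose (m * r) : ℕ) : ℝ)) =
      (s : ℝ) • (logOf (bellSeriesDivX x)).subst (lagrangeSeries (bellSeriesDivX x ^ r)) := by
  have hF := (constantCoeff_bellSeriesDivX x).trans hx1
  ext m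
  rcases eq_or_ne m 0 with rfl | hm
  · rw [coeff_smul, coeff_zero_eq_constantCoeff_apply, coeff_zero_eq_constantCoeff_apply,
      constantCoeff_bellSeries,
      constantCoeff_subst_of_constantCoeff_eq_zero_s12 (constantCoeff_lagrangeSeries _),
      constantCoeff_logOf hF, smul_zero]
  · have hlog := natCast_mul_coeff_logOf_subst_lagrangeSeries hF r hm
    have hrm : ((r * m : ℕ) : ℝ) ≠ 0 := Nat.cast_ne_zero.2 (Nat.mul_ne_zero hr hm)
    rw [bellSeries, coeff_mk, if_neg hm, coeff_smul, show (r + 1) * m = m * r + m by ring,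
      mul_div_assoc, bellB_add_div_choose, mul_comm m r]
    field_simp
    linear_combination -(s : ℝ) * hlog

theorem stmt_12 (x : ℕ → ℝ) (hx1 : x 1 = 1) (r s : ℕ) (hr : 1 ≤ r) (n : ℕ) (hn : 1 ≤ n) :
    bellA n
        (fun m => ((s : ℕ) : ℝ) / ((m * r : ℕ) : ℝ) *
          bellB ((r + 1) * m) (m * r) x / ((((r + 1) * m).choose (m * r) : ℕ) : ℝ)) =
      ((s : ℕ) : ℝ) / ((n * r + s : ℕ) : ℝ) *
        bellB ((r + 1) * n + s) (n * r + s) x /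
          ((((r + 1) * n + s).choose (n * r + s) : ℕ) : ℝ) := by
  set F := bellSeriesDivX x
  have hF : constantCoeff F = 1 := (constantCoeff_bellSeriesDivX x).trans hx1
  have hw : HasSubst (lagrangeSeries (F ^ r)) :=
    HasSubst.of_constantCoeff_zero' (constantCoeff_lagrangeSeries _)
  have hsℓ : HasSubst ((s : ℝ) • logOf F) :=
    HasSubst.of_constantCoeff_zero' (by simp [constantCoeff_logOf hF])
  rw [bellA_eq_factorial_mul_coeff_exp_subst _ (by omega),
    bellSeries_div_choose_eq_smul_logOf_subst x hx1 s (by omega), ← subst_smul hw,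
    ← subst_comp_subst_apply hsℓ hw, exp_subst_smul_logOf hF,
    show (r + 1) * n + s = (n * r + s) + n by ring, mul_div_assoc, bellB_add_div_choose,
    show n * r + s = s + r * n by ring]
  have hpow := natCast_add_mul_coeff_pow_subst_lagrangeSeries F r s (by omega : n ≠ 0)
  have hsrn : ((s + r * n : ℕ) : ℝ) ≠ 0 :=
    Nat.cast_ne_zero.2 (Nat.add_pos_right s (Nat.mul_pos hr hn)).ne'
  field_simp
  linear_combination hpow
end

section
/- For natural numbers n ≥ 1, r ≥ 1, s ≥ 0 with R := nr + s, and real numbers x, β, α, the sequence Z₃(n,s) := (1/R) ∑_{j=0}^n C(n,j) (βj + αR)^{n-j} R^j t^j satisfies A_n(s·Z₃(1,0), ..., s·Z₃(n,0)) = s·Z₃(n,s) for all s ≥ 1, where Z₃(m,0) is computed with R = mr (convention 0^0 = 1). -/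
open Finset

/-- `Z₃(n,s) = (1/R) ∑_{j=0}^n C(n,j)(βj+αR)^{n-j} R^j t^j`, `R = nr+s`. -/
noncomputable def Z18 (r : ℕ) (α β t : ℝ) (n s : ℕ) : ℝ :=
  (1 / ((n * r + s : ℕ) : ℝ)) *
    ∑ j ∈ Finset.range (n + 1),
      (n.choose j : ℝ) * (β * j + α * ((n * r + s : ℕ) : ℝ)) ^ (n - j) *
        ((n * r + s : ℕ) : ℝ) ^ j * t ^ j

/-!
Put `q = αX + tX e^{βX}`. Expanding `e^{Rq} = e^{RαX} ∑ⱼ (Rt)ʲ Xʲ e^{jβX} / j!` shows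
`Z₃(n,s) = n! [Xⁿ] e^{Rq} / R` with `R = nr + s`, and by definition of the Bell polynomials
`A_n(y₁, y₂, …) = n! [Xⁿ] exp (∑ₘ yₘ Xᵐ / m!)`.

Let `w` be the power series with `w = X e^{r q(w)}`, i.e. the compositional inverse of
`ψ = X e^{-rq}`. Lagrange inversion, `n [Xⁿ] H(w) = [Xⁿ⁻¹] H' e^{nrq}`, applied to `H = q`
and to `H = e^{sq}` gives `[Xᵐ] q(w) = [Xᵐ] e^{mrq} / (mr) = Z₃(m,0) / m!` and
`[Xⁿ] e^{s q(w)} = s / (nr + s) · [Xⁿ] e^{(nr+s)q}`, so both sides equal `n! [Xⁿ] e^{s q(w)}`.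

Lagrange inversion is proved by writing `H = (H ∘ w) ∘ ψ`: only the powers `ψᵏ`, `k ≤ n`, matter,
and `(ψᵏ)' e^{nrq} = k Xᵏ⁻¹ (1 - r X q') e^{(n-k)rq}`, whose coefficient of `Xⁿ⁻¹` vanishes for
`k < n` because `q' e^{jrq}` is the derivative of `e^{jrq} / (jr)`.
-/

open PowerSeries

section Truncation

variable {R : Type*} [CommRing R] {g : R⟦X⟧}

theorem constantCoeff_smul_eq_zero (hg : constantCoeff g = 0) (c : R) :
    constantCoeff (c • g) = 0 := by
  rw [constantCoeff_smul, hg, smul_zero]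

theorem coeff_pow_of_lt (hg : constantCoeff g = 0) {m d : ℕ} (h : m < d) :
    coeff m (g ^ d) = 0 :=
  X_pow_dvd_iff.mp (pow_dvd_pow_of_dvd (X_dvd_iff.mpr hg) d) m h

theorem X_pow_dvd_subst_sub_sum (hg : constantCoeff g = 0) (P : R⟦X⟧) (n : ℕ) :
    X ^ (n + 1) ∣ P.subst g - ∑ j ∈ range (n + 1), coeff j P • g ^ j := by
  refine X_pow_dvd_iff.mpr fun m hm => ?_
  rw [map_sub, coeff_subst' (HasSubst.of_constantCoeff_zero' hg), sub_eq_zero, map_sum]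
  refine finsum_eq_finsetSum_of_support_subset _ fun d hd => ?_
  by_contra hdn
  simp only [coe_range, Set.mem_Iio, not_lt] at hdn
  simp only [Function.mem_support, coeff_pow_of_lt hg (show m < d by omega), smul_zero] at hd
  exact hd rfl

theorem coeff_mul_subst (hg : constantCoeff g = 0) (F P : R⟦X⟧) (n : ℕ) :
    coeff n (F * P.subst g) = ∑ j ∈ range (n + 1), coeff j P * coeff n (F * g ^ j) := by
  have h := X_pow_dvd_iff.mp ((X_pow_dvd_subst_sub_sum hg P n).mul_left F) n n.lt_succ_self
  simpa only [mul_sub, map_sub, Finset.mul_sum, map_sum, mul_smul_comm, coeff_smul,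
    smul_eq_mul, sub_eq_zero] using h

theorem X_pow_dvd_derivative {F : R⟦X⟧} {n : ℕ} (h : X ^ (n + 1) ∣ F) :
    X ^ n ∣ d⁄dX R F := by
  obtain ⟨G, rfl⟩ := h
  rw [Derivation.leibniz, derivative_pow, derivative_X, smul_eq_mul, smul_eq_mul,
    add_tsub_cancel_right, mul_one, pow_succ]
  exact Dvd.intro (X * d⁄dX R G + G * ((n + 1 : ℕ) : R⟦X⟧)) (by push_cast; ring)

end Truncation

variable {K : Type*} [Field K] [CharZero K]

section ExpSubst

variable {f g q : K⟦X⟧}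

theorem constantCoeff_exp_subst (hf : constantCoeff f = 0) :
    constantCoeff ((exp K).subst f) = 1 := by
  rw [← coeff_zero_eq_constantCoeff_apply, coeff_subst' (HasSubst.of_constantCoeff_zero' hf),
    finsum_eq_single _ 0]
  · simp
  · intro d hd
    rw [coeff_zero_eq_constantCoeff_apply, map_pow, hf, zero_pow hd, smul_zero]

theorem derivative_exp_subst (hf : constantCoeff f = 0) :
    d⁄dX K ((exp K).subst f) = (exp K).subst f * d⁄dX K f := by
  rw [derivative_subst (HasSubst.of_constantCoeff_zero' hf), derivative_exp]

theorem exp_subst_mul_exp_subst_neg (hf : constantCoeff f = 0) :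
    (exp K).subst f * (exp K).subst (-f) = 1 := by
  have hnf : constantCoeff (-f) = 0 := by rw [map_neg, hf, neg_zero]
  apply derivative.ext
  · rw [Derivation.leibniz, derivative_exp_subst hf, derivative_exp_subst hnf, map_neg,
      derivative_one, smul_eq_mul, smul_eq_mul]
    ring
  · rw [map_mul, constantCoeff_exp_subst hf, constantCoeff_exp_subst hnf, mul_one, map_one]

theorem exp_subst_add (hf : constantCoeff f = 0) (hg : constantCoeff g = 0) :
    (exp K).subst (f + g) = (exp K).subst f * (exp K).subst g := by
  have hfg : constantCoeff (f + g) = 0 := by rw [map_add, hf, hg, add_zero]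
  have hnf : constantCoeff (-f) = 0 := by rw [map_neg, hf, neg_zero]
  have hng : constantCoeff (-g) = 0 := by rw [map_neg, hg, neg_zero]
  have key : (exp K).subst (f + g) * (exp K).subst (-f) * (exp K).subst (-g) = 1 := by
    apply derivative.ext
    · simp only [Derivation.leibniz, derivative_exp_subst hfg, derivative_exp_subst hnf,
        derivative_exp_subst hng, map_add, map_neg, derivative_one, smul_eq_mul]
      ring
    · simp only [map_mul, constantCoeff_exp_subst hfg, constantCoeff_exp_subst hnf,
        constantCoeff_exp_subst hng, map_one, mul_one]
  calc (exp K).subst (f + g)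
      = (exp K).subst (f + g) * ((exp K).subst f * (exp K).subst (-f))
          * ((exp K).subst g * (exp K).subst (-g)) := by
        rw [exp_subst_mul_exp_subst_neg hf, exp_subst_mul_exp_subst_neg hg, mul_one, mul_one]
    _ = (exp K).subst (f + g) * (exp K).subst (-f) * (exp K).subst (-g)
          * ((exp K).subst f * (exp K).subst g) := by ring
    _ = (exp K).subst f * (exp K).subst g := by rw [key, one_mul]

theorem exp_subst_pow (hf : constantCoeff f = 0) (n : ℕ) :
    (exp K).subst f ^ n = (exp K).subst ((n : K) • f) := by
  induction n with
  | zero =>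
    rw [pow_zero, Nat.cast_zero, zero_smul]
    exact derivative.ext
      (by rw [derivative_one, derivative_exp_subst (map_zero _), map_zero, mul_zero])
      (by rw [map_one, constantCoeff_exp_subst (map_zero _)])
  | succ n ih =>
    rw [pow_succ, ih, ← exp_subst_add (constantCoeff_smul_eq_zero hf _) hf, Nat.cast_succ,
      add_smul, one_smul]

theorem exp_subst_smul_pow (hq : constantCoeff q = 0) (r : K) (n : ℕ) :
    (exp K).subst (r • q) ^ n = (exp K).subst ((n * r) • q) := by
  rw [exp_subst_pow (constantCoeff_smul_eq_zero hq r), smul_smul]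

theorem derivative_exp_subst_smul (hq : constantCoeff q = 0) (c : K) :
    d⁄dX K ((exp K).subst (c • q)) = c • ((exp K).subst (c • q) * d⁄dX K q) := by
  rw [derivative_exp_subst (constantCoeff_smul_eq_zero hq c), Derivation.map_smul,
    mul_smul_comm]

theorem coeff_derivative_mul_exp_subst (hq : constantCoeff q = 0) (c : K) (n : ℕ) :
    c * coeff n (d⁄dX K q * (exp K).subst (c • q))
      = (n + 1) * coeff (n + 1) ((exp K).subst (c • q)) := by
  rw [mul_comm (n + 1 : K), ← coeff_derivative, derivative_exp_subst_smul hq, coeff_smul,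
    smul_eq_mul, mul_comm ((exp K).subst _)]

end ExpSubst

section LagrangeInversion

variable {q : K⟦X⟧} (hq : constantCoeff q = 0) (r : K)
include hq

theorem coeff_derivative_pow_mul_exp_subst_pow {n k : ℕ} (hn : 0 < n) (hk : k ≤ n) :
    coeff (n - 1) (d⁄dX K ((X * (exp K).subst (-r • q)) ^ k) * (exp K).subst (r • q) ^ n)
      = if k = n then (n : K) else 0 := by
  obtain _ | m := k
  · rw [pow_zero, derivative_one, zero_mul, map_zero, if_neg hn.ne]
  obtain ⟨j, rfl⟩ : ∃ j, n = m + 1 + j := ⟨n - (m + 1), by omega⟩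
  have huv : (exp K).subst (r • q) * (exp K).subst (-r • q) = 1 := by
    rw [neg_smul]
    exact exp_subst_mul_exp_subst_neg (constantCoeff_smul_eq_zero hq r)
  set u := (exp K).subst (r • q)
  set v := (exp K).subst (-r • q)
  have hvu : (v * u) ^ (m + 1) = 1 := by rw [mul_comm, huv, one_pow]
  have hv : d⁄dX K v = C (-r) * (v * d⁄dX K q) := by
    rw [derivative_exp_subst_smul hq, smul_eq_C_mul]
  have key : d⁄dX K ((X * v) ^ (m + 1)) * u ^ (m + 1 + j)
      = C ((m : K) + 1) * (X ^ m * u ^ j)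
        - C (r * ((m : K) + 1)) * (X ^ m * (X * (d⁄dX K q * u ^ j))) := by
    rw [derivative_pow, Derivation.leibniz, derivative_X, hv]
    simp only [smul_eq_mul, map_neg, map_mul, map_add, map_one, map_natCast,
      add_tsub_cancel_right, Nat.cast_add, Nat.cast_one]
    linear_combination ((m + 1 : K⟦X⟧) * X ^ m * u ^ j * (1 - C r * X * d⁄dX K q)) * hvu
  rw [key, show m + 1 + j - 1 = j + m by omega, map_sub, coeff_C_mul, coeff_C_mul,
    coeff_X_pow_mul, coeff_X_pow_mul]
  obtain _ | i := j
  · rw [coeff_zero_X_mul, pow_zero, coeff_zero_eq_constantCoeff_apply, map_one, if_pos rfl]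
    push_cast
    ring
  · have hderiv := coeff_derivative_mul_exp_subst hq (((i + 1 : ℕ) : K) * r) i
    rw [← exp_subst_smul_pow hq] at hderiv
    rw [coeff_succ_X_mul, if_neg (by omega)]
    have hi : ((i + 1 : ℕ) : K) ≠ 0 := Nat.cast_ne_zero.mpr (Nat.succ_ne_zero i)
    push_cast at hderiv hi ⊢
    have : r * coeff i (d⁄dX K q * u ^ (i + 1)) = coeff (i + 1) (u ^ (i + 1)) :=
      mul_left_cancel₀ hi (by linear_combination hderiv)
    linear_combination (-((m : K) + 1)) * this

theorem coeff_derivative_subst_mul_exp_subst_pow (G : K⟦X⟧) {n : ℕ} (hn : 0 < n) :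
    coeff (n - 1) (d⁄dX K (G.subst (X * (exp K).subst (-r • q))) * (exp K).subst (r • q) ^ n)
      = n * coeff n G := by
  set ψ := X * (exp K).subst (-r • q)
  have hψ : constantCoeff ψ = 0 := by rw [map_mul, constantCoeff_X, zero_mul]
  set S := ∑ k ∈ range (n + 1), coeff k G • ψ ^ k
  have htail : X ^ n ∣ (d⁄dX K (G.subst ψ) - d⁄dX K S) * (exp K).subst (r • q) ^ n := by
    rw [← map_sub]
    exact (X_pow_dvd_derivative (X_pow_dvd_subst_sub_sum hψ G n)).mul_right _
  have hS : coeff (n - 1) (d⁄dX K S * (exp K).subst (r • q) ^ n) = n * coeff n G := by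
    simp only [S, map_sum, Derivation.map_smul, Finset.sum_mul, smul_mul_assoc, coeff_smul,
      smul_eq_mul]
    rw [Finset.sum_congr rfl fun k hk => by
      rw [coeff_derivative_pow_mul_exp_subst_pow hq r hn (mem_range_succ_iff.mp hk),
        mul_ite, mul_zero]]
    rw [Finset.sum_ite_eq', if_pos (self_mem_range_succ n), mul_comm]
  rw [← hS, ← sub_eq_zero, ← map_sub, ← sub_mul]
  exact X_pow_dvd_iff.mp htail _ (by omega)

theorem exists_subst_eq_X :
    ∃ w : K⟦X⟧, constantCoeff w = 0 ∧ w.subst (X * (exp K).subst (-r • q)) = (X : K⟦X⟧) := by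
  have hψ : constantCoeff (X * (exp K).subst (-r • q)) = 0 := by
    rw [map_mul, constantCoeff_X, zero_mul]
  have hψ1 : IsUnit (coeff 1 (X * (exp K).subst (-r • q))) := by
    rw [coeff_succ_X_mul, coeff_zero_eq_constantCoeff_apply,
      constantCoeff_exp_subst (constantCoeff_smul_eq_zero hq _)]
    exact isUnit_one
  exact ⟨_, constantCoeff_substInvOfIsUnit _ hψ1, subst_substInvOfIsUnit_left _ hψ hψ1⟩

/- `w.subst ψ = X` makes `w` the compositional inverse of `ψ = X e^{-rq}`,
that is, `w = X e^{r q(w)}`. -/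
theorem lagrange_inversion {w : K⟦X⟧} (hw0 : constantCoeff w = 0)
    (hw : w.subst (X * (exp K).subst (-r • q)) = (X : K⟦X⟧)) (H : K⟦X⟧) {n : ℕ} (hn : 0 < n) :
    n * coeff n (H.subst w) = coeff (n - 1) (d⁄dX K H * (exp K).subst (r • q) ^ n) := by
  have hψ : constantCoeff (X * (exp K).subst (-r • q)) = 0 := by
    rw [map_mul, constantCoeff_X, zero_mul]
  have hH : PowerSeries.subst (X * (exp K).subst (-r • q)) (H.subst w) = H := by
    rw [subst_comp_subst_apply (HasSubst.of_constantCoeff_zero' hw0)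
      (HasSubst.of_constantCoeff_zero' hψ), hw, X_subst]
  rw [← coeff_derivative_subst_mul_exp_subst_pow hq r (H.subst w) hn, hH]

theorem lagrange_inversion_self (hr : r ≠ 0) {w : K⟦X⟧} (hw0 : constantCoeff w = 0)
    (hw : w.subst (X * (exp K).subst (-r • q)) = (X : K⟦X⟧)) {n : ℕ} (hn : 0 < n) :
    coeff n (q.subst w) = coeff n ((exp K).subst ((n * r) • q)) / (n * r) := by
  obtain ⟨m, rfl⟩ : ∃ m, n = m + 1 := ⟨n - 1, by omega⟩
  have hlag := lagrange_inversion hq r hw0 hw q hn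
  have hderiv := coeff_derivative_mul_exp_subst hq (((m + 1 : ℕ) : K) * r) m
  rw [exp_subst_smul_pow hq, add_tsub_cancel_right] at hlag
  have hm : ((m + 1 : ℕ) : K) ≠ 0 := Nat.cast_ne_zero.mpr (Nat.succ_ne_zero m)
  push_cast at hlag hderiv hm ⊢
  rw [eq_div_iff (mul_ne_zero hm hr)]
  exact mul_left_cancel₀ hm (by linear_combination ((m + 1) * r) * hlag + hderiv)

theorem lagrange_inversion_exp {w : K⟦X⟧} (hw0 : constantCoeff w = 0)
    (hw : w.subst (X * (exp K).subst (-r • q)) = (X : K⟦X⟧)) (s : K) {n : ℕ} (hn : 0 < n)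
    (hR : n * r + s ≠ 0) :
    coeff n (PowerSeries.subst w ((exp K).subst (s • q)))
      = s / (n * r + s) * coeff n ((exp K).subst ((n * r + s) • q)) := by
  obtain ⟨m, rfl⟩ : ∃ m, n = m + 1 := ⟨n - 1, by omega⟩
  have hprod : d⁄dX K ((exp K).subst (s • q)) * (exp K).subst (r • q) ^ (m + 1)
      = C s * (d⁄dX K q * (exp K).subst ((((m + 1 : ℕ) : K) * r + s) • q)) := by
    rw [derivative_exp_subst_smul hq, exp_subst_smul_pow hq, add_smul,
      exp_subst_add (constantCoeff_smul_eq_zero hq _) (constantCoeff_smul_eq_zero hq s),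
      smul_eq_C_mul]
    ring
  have hlag := lagrange_inversion hq r hw0 hw ((exp K).subst (s • q)) hn
  have hderiv := coeff_derivative_mul_exp_subst hq (((m + 1 : ℕ) : K) * r + s) m
  rw [hprod, add_tsub_cancel_right, coeff_C_mul] at hlag
  have hm : ((m + 1 : ℕ) : K) ≠ 0 := Nat.cast_ne_zero.mpr (Nat.succ_ne_zero m)
  push_cast at hlag hderiv hm hR ⊢
  rw [div_mul_eq_mul_div, eq_div_iff hR]
  exact mul_left_cancel₀ hm (by linear_combination ((m + 1) * r + s) * hlag + s * hderiv)

end LagrangeInversion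

noncomputable def linExpSeries (α β t : K) : K⟦X⟧ := α • X + t • (X * rescale β (exp K))

theorem constantCoeff_linExpSeries (α β t : K) : constantCoeff (linExpSeries α β t) = 0 := by
  simp [linExpSeries, constantCoeff_smul]

theorem coeff_rescale_exp (c : K) (n : ℕ) :
    coeff n (rescale c (exp K)) = c ^ n / n.factorial := by
  rw [coeff_rescale, coeff_exp, map_div₀, map_one, map_natCast, mul_one_div]

theorem factorial_mul_coeff_exp_subst_linExpSeries (α β t R : K) (n : ℕ) :
    n.factorial * coeff n ((exp K).subst (R • linExpSeries α β t))
      = ∑ j ∈ range (n + 1), (n.choose j : K) * (β * j + α * R) ^ (n - j) * R ^ j * t ^ j := by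
  have hV : constantCoeff ((R * t) • (X * rescale β (exp K))) = 0 := by
    rw [constantCoeff_smul, map_mul, constantCoeff_X, zero_mul, smul_zero]
  have hsplit : R • linExpSeries α β t = (R * α) • X + (R * t) • (X * rescale β (exp K)) := by
    rw [linExpSeries, smul_add, smul_smul, smul_smul]
  have hpow (j : ℕ) : rescale (R * α) (exp K) * ((R * t) • (X * rescale β (exp K))) ^ j
      = (R * t) ^ j • (X ^ j * rescale (β * j + α * R) (exp K)) := by
    rw [smul_pow, mul_pow (X : K⟦X⟧), ← map_pow, exp_pow_eq_rescale_exp, rescale_rescale,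
      mul_smul_comm, mul_left_comm, exp_mul_exp_eq_exp_add]
    ring_nf
  rw [hsplit, exp_subst_add (constantCoeff_smul_eq_zero constantCoeff_X _) hV,
    ← rescale_eq_subst, coeff_mul_subst hV, Finset.mul_sum]
  refine Finset.sum_congr rfl fun j hj => ?_
  have hjn : j ≤ n := mem_range_succ_iff.mp hj
  rw [hpow, coeff_smul, coeff_X_pow_mul', if_pos hjn, coeff_rescale_exp, coeff_exp,
    Nat.cast_choose K hjn, smul_eq_mul, map_div₀, map_one, map_natCast]
  field_simp
  ring

theorem bellA_eq_factorial_mul_coeff_exp_subst_s18 (n : ℕ) (x : ℕ → ℝ) :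
    bellA n x = n.factorial * coeff n ((exp ℝ).subst
      (mk fun m => if m = 0 then 0 else x m / (m.factorial : ℝ))) := by
  set g : ℝ⟦X⟧ := mk fun m => if m = 0 then 0 else x m / (m.factorial : ℝ)
  have hg : constantCoeff g = 0 := by simp [g, ← coeff_zero_eq_constantCoeff_apply]
  rw [← one_mul ((exp ℝ).subst g), coeff_mul_subst hg, Finset.range_eq_Ico,
    Finset.sum_eq_sum_Ico_succ_bot n.succ_pos, bellA]
  simp only [one_mul, coeff_exp, pow_zero, coeff_one, map_div₀, map_one, map_natCast]
  split_ifs with hn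
  · subst hn
    simp
  · rw [zero_add, mul_zero, zero_add, Finset.mul_sum, ← Finset.Ico_add_one_right_eq_Icc]
    refine Finset.sum_congr rfl fun k _ => ?_
    rw [bellB]
    ring

theorem Z18_eq (r : ℕ) (α β t : ℝ) (n s : ℕ) :
    Z18 r α β t n s = n.factorial * coeff n ((exp ℝ).subst
      (((n * r + s : ℕ) : ℝ) • linExpSeries α β t)) / ((n * r + s : ℕ) : ℝ) := by
  rw [factorial_mul_coeff_exp_subst_linExpSeries, Z18, one_div_mul_eq_div]

theorem stmt_18_general (r : ℕ) (hr : 1 ≤ r) (α β t : ℝ) (n s : ℕ) (hn : 1 ≤ n) :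
    bellA n (fun m => (s : ℝ) * Z18 r α β t m 0) = (s : ℝ) * Z18 r α β t n s := by
  have hq := constantCoeff_linExpSeries α β t
  have hr0 : (r : ℝ) ≠ 0 := by positivity
  obtain ⟨w, hw0, hw⟩ := exists_subst_eq_X hq (r : ℝ)
  have hZ : (mk fun m => if m = 0 then 0 else (s : ℝ) * Z18 r α β t m 0 / (m.factorial : ℝ))
      = (s : ℝ) • (linExpSeries α β t).subst w := by
    ext m
    rw [coeff_mk, coeff_smul, smul_eq_mul]
    split_ifs with hm
    · rw [hm, coeff_zero_eq_constantCoeff_apply,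
        show constantCoeff (PowerSeries.subst w (linExpSeries α β t)) = 0 from
          constantCoeff_subst_eq_zero hw0 _ hq, mul_zero]
    · rw [lagrange_inversion_self hq _ hr0 hw0 hw (Nat.pos_of_ne_zero hm), Z18_eq]
      push_cast
      rw [add_zero]
      field_simp
  rw [bellA_eq_factorial_mul_coeff_exp_subst_s18, hZ,
    ← subst_smul (HasSubst.of_constantCoeff_zero' hw0),
    ← subst_comp_subst_apply (HasSubst.of_constantCoeff_zero' (constantCoeff_smul_eq_zero hq _))
      (HasSubst.of_constantCoeff_zero' hw0),
    lagrange_inversion_exp hq _ hw0 hw _ hn (by positivity), Z18_eq]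
  push_cast
  field_simp

theorem stmt_18 (r : ℕ) (hr : 1 ≤ r) (α β t : ℝ) (n s : ℕ) (hn : 1 ≤ n) (hs : 1 ≤ s) :
    bellA n (fun m => (s : ℝ) * Z18 r α β t m 0) = (s : ℝ) * Z18 r α β t n s :=
  stmt_18_general r hr α β t n s hn
end
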